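/- arXiv:1902.09406 — 2 statements merged into one kernel-verified Lean document; each statement's English description precedes it below -/
import Mathlib

section
/- (Fatou's Lemma for game-theoretic upper expectations.) Let X be a finite non-empty set with an imprecise probability tree and associated game-theoretic upper expectation Ē_V. For any situation s ∈ X* and any sequence {f_n}_{n∈ℕ₀} of bounded-below extended-real variables on Ω that is uniformly bounded below (∃M ∈ ℝ with f_n ≥ M for all n), one has Ē_V(liminf_{n→∞} f_n | s) ≤ liminf_{n→∞} Ē_V(f_n | s), where the liminf of the functions is taken pointwise. -/
open Filter Topology

/-- A function to the extended reals is bounded below by some real number. -/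
def BddBelowF {Y : Type*} (f : Y → EReal) : Prop :=
  ∃ M : ℝ, ∀ y, (M : EReal) ≤ f y

/-- An upper expectation on the bounded-below extended-real functions on `Y`:
axioms E1 (constants), E2 (subadditivity), E3 (positive/`+∞` homogeneity on
non-negative functions) and E4 (monotonicity). -/
structure IsUpperExpectation {Y : Type*} (E : (Y → EReal) → EReal) : Prop where
  const : ∀ c : ℝ, E (fun _ => (c : EReal)) = (c : EReal)
  subadd : ∀ f g : Y → EReal, BddBelowF f → BddBelowF g →
    E (fun y => f y + g y) ≤ E f + E g
  homog : ∀ lam : EReal, 0 < lam → ∀ f : Y → EReal, BddBelowF f → (∀ y, 0 ≤ f y) →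
    E (fun y => lam * f y) = lam * E f
  mono : ∀ f g : Y → EReal, BddBelowF f → BddBelowF g → (∀ y, f y ≤ g y) → E f ≤ E g

/-- The initial segment `ω^n = (ω_1, …, ω_n)` of a path `ω ∈ X^ℕ`. -/
def seg {X : Type*} (ω : ℕ → X) (n : ℕ) : List X :=
  List.ofFn (fun i : Fin n => ω i)

/-- The cylinder event `Γ(s)` of all paths going through the situation `s`. -/
def cyl {X : Type*} (s : List X) : Set (ℕ → X) :=
  {ω | seg ω s.length = s}

/-- A global variable is `n`-measurable if it only depends on the first `n` states. -/
def NMeas {X α : Type*} (n : ℕ) (f : (ℕ → X) → α) : Prop :=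
  ∀ ω ω' : ℕ → X, seg ω n = seg ω' n → f ω = f ω'

/-- A supermartingale for an imprecise probability tree `Q`: a bounded-below
extended-real process `M` on situations such that `Q_s(M(s·)) ≤ M(s)` everywhere. -/
def IsSupermartingale {X : Type*} (Q : List X → (X → EReal) → EReal)
    (M : List X → EReal) : Prop :=
  (∃ B : ℝ, ∀ s, (B : EReal) ≤ M s) ∧ ∀ s, Q s (fun x => M (s ++ [x])) ≤ M s

/-- The game-theoretic upper expectation `Ē_V(f | s)`. -/
noncomputable def gUE {X : Type*} (Q : List X → (X → EReal) → EReal)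
    (f : (ℕ → X) → EReal) (s : List X) : EReal :=
  sInf { y | ∃ M : List X → EReal, IsSupermartingale Q M ∧
    (∀ ω ∈ cyl s, f ω ≤ Filter.liminf (fun n => M (seg ω n)) Filter.atTop) ∧ M s = y }

namespace Fatou18

attribute [local instance] Classical.propDecidable

/-- State of the doubling strategy: either waiting (having completed `k` rounds),
or invested in the witness bought at situation `w`. -/
inductive DSt (X : Type*) where
  | wait : ℕ → DSt X
  | invest : ℕ → List X → DSt X

/-- Number of completed rounds. -/
def kOf {X : Type*} : DSt X → ℕ
  | .wait k => k
  | .invest k _ => k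


/-! ### EReal utilities -/

lemma le_of_forall_rat_lt {x y : EReal} (h : ∀ q : ℚ, ((q:ℝ):EReal) < x → ((q:ℝ):EReal) ≤ y) :
    x ≤ y := by
  by_contra hxy
  push_neg at hxy
  obtain ⟨q, hq1, hq2⟩ := EReal.lt_iff_exists_rat_btwn.1 hxy
  exact absurd (h q hq2) (not_le.2 hq1)

lemma eq_top_of_forall_real_le {x : EReal} (h : ∀ r : ℝ, (r:EReal) ≤ x) : x = ⊤ := by
  induction x with
  | bot => simpa using h 0
  | coe c => have := h (c+1); norm_cast at this; linarith
  | top => rfl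

lemma le_add_eps {x y : EReal} (h : ∀ ε : ℝ, 0 < ε → x ≤ y + (ε:EReal)) : x ≤ y := by
  induction y with
  | bot => simpa using h 1 one_pos
  | coe c =>
      refine le_of_forall_rat_lt (fun q hq => ?_) |>.trans_eq rfl
      by_contra hqc
      push_neg at hqc
      have hqc' : c < (q:ℝ) := by exact_mod_cast hqc
      have := h (((q:ℝ) - c)/2) (by linarith)
      have h2 : ((c:ℝ):EReal) + ((((q:ℝ) - c)/2 : ℝ):EReal) = (((c + ((q:ℝ)-c)/2) : ℝ) : EReal) := by
        norm_cast
      rw [h2] at this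
      have := hq.trans_le this
      rw [EReal.coe_lt_coe_iff] at this
      linarith
  | top => exact le_top

lemma iInf_add_real {ι : Sort*} [Nonempty ι] (f : ι → EReal) (r : ℝ) :
    (⨅ i, f i) + (r:EReal) = ⨅ i, (f i + (r:EReal)) := by
  apply le_antisymm
  · exact le_iInf fun i => add_le_add_left (iInf_le _ _) _
  · rw [← EReal.sub_le_iff_le_add (by simp) (by simp)]
    exact le_iInf fun i => by
      rw [EReal.sub_le_iff_le_add (by simp) (by simp)]
      exact iInf_le _ _
lemma iSup_add_real {ι : Sort*} [Nonempty ι] (f : ι → EReal) (r : ℝ) :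
    (⨆ i, f i) + (r:EReal) = ⨆ i, (f i + (r:EReal)) := by
  apply le_antisymm
  · rw [← EReal.le_sub_iff_add_le (by simp) (by simp)]
    exact iSup_le fun i => by
      rw [EReal.le_sub_iff_add_le (by simp) (by simp)]
      exact le_iSup (fun i => f i + (r:EReal)) i
  · exact iSup_le fun i => add_le_add_left (le_iSup _ _) _

lemma coe_finset_sum (f : ℕ → ℝ) (K : ℕ) :
    ((∑ i ∈ Finset.range K, f i : ℝ) : EReal) = ∑ i ∈ Finset.range K, ((f i : ℝ):EReal) := by
  induction K with
  | zero => simp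
  | succ K ih => rw [Finset.sum_range_succ, Finset.sum_range_succ, EReal.coe_add, ih]

/-! ### The `liminf` as an `iSup iInf` -/

noncomputable def llim (u : ℕ → EReal) : EReal := ⨆ n, ⨅ k, u (n + k)

lemma liminf_eq_llim (u : ℕ → EReal) : Filter.liminf u atTop = llim u := by
  rw [liminf_eq_iSup_iInf_of_nat, llim]
  congr 1
  funext n
  apply le_antisymm
  · exact le_iInf fun k => iInf₂_le (n + k) (Nat.le_add_right _ _)
  · refine le_iInf fun i => le_iInf fun hi => iInf_le_of_le (i - n) ?_
    rw [Nat.add_sub_cancel' hi]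

lemma llim_mono {u v : ℕ → EReal} (h : ∀ n, u n ≤ v n) : llim u ≤ llim v :=
  iSup_mono fun n => iInf_mono fun k => h _

lemma llim_le_of_eventually_le {u : ℕ → EReal} {C : EReal} {m0 : ℕ}
    (h : ∀ m ≥ m0, u m ≤ C) : llim u ≤ C :=
  iSup_le fun n => (iInf_le _ (m0 + n - n)).trans (by
    have : n + (m0 + n - n) ≥ m0 := by omega
    exact h _ this)

lemma le_llim_of_eventually_le {u : ℕ → EReal} {C : EReal} {m0 : ℕ}
    (h : ∀ m ≥ m0, C ≤ u m) : C ≤ llim u :=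
  le_iSup_of_le m0 (le_iInf fun k => h _ (Nat.le_add_right _ _))

lemma llim_add_real (u : ℕ → EReal) (r : ℝ) :
    llim (fun n => u n + (r:EReal)) = llim u + r := by
  rw [llim, llim, iSup_add_real]
  congr 1; funext n; rw [iInf_add_real]

lemma frequently_of_llim_lt {u : ℕ → EReal} {a : EReal} (h : llim u < a) :
    ∀ n, ∃ m ≥ n, u m < a := by
  intro n
  rw [llim] at h
  have h1 : (⨅ k, u (n + k)) < a := lt_of_le_of_lt (le_iSup (fun n => ⨅ k, u (n + k)) n) h
  obtain ⟨k, hk⟩ := iInf_lt_iff.1 h1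
  exact ⟨n + k, Nat.le_add_right _ _, hk⟩

lemma eventually_of_lt_llim {u : ℕ → EReal} {a : EReal} (h : a < llim u) :
    ∃ n, ∀ m ≥ n, a < u m := by
  obtain ⟨n, hn⟩ := lt_iSup_iff.1 h
  exact ⟨n, fun m hm => hn.trans_le (by
    have : u (n + (m - n)) = u m := by congr 1; omega
    exact this ▸ iInf_le _ (m - n))⟩

lemma llim_eq_top {u : ℕ → EReal} (h : ∀ C : ℝ, ∃ m0, ∀ m ≥ m0, (C:EReal) ≤ u m) :
    llim u = ⊤ :=
  eq_top_of_forall_real_le fun r => by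
    obtain ⟨m0, hm0⟩ := h r
    exact le_llim_of_eventually_le hm0

/-! ### Segment and cylinder lemmas -/

variable {X : Type*}

lemma seg_length (ω : ℕ → X) (n : ℕ) : (seg ω n).length = n := by
  simp [seg]

lemma seg_succ (ω : ℕ → X) (n : ℕ) : seg ω (n+1) = seg ω n ++ [ω n] := by
  rw [seg, seg, List.ofFn_succ', List.concat_eq_append]
  simp

lemma seg_prefix (ω : ℕ → X) {m n : ℕ} (h : m ≤ n) : seg ω m <+: seg ω n := by
  induction n with
  | zero => simp_all
  | succ n ih =>
      rcases Nat.lt_or_ge m (n+1) with h' | h'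
      · exact (ih (by omega)).trans (by rw [seg_succ]; exact ⟨[ω n], rfl⟩)
      · have : m = n + 1 := by omega
        subst this; exact List.prefix_refl _

lemma seg_take {ω : ℕ → X} {m n : ℕ} (h : m ≤ n) : List.take m (seg ω n) = seg ω m := by
  have h2 := seg_prefix ω h
  rw [List.prefix_iff_eq_take, seg_length] at h2
  exact h2.symm

lemma seg_eq_of_prefix {ω : ℕ → X} {t : List X} {n : ℕ} (h : t <+: seg ω n) :
    seg ω t.length = t := by
  have hlen : t.length ≤ n := by
    have := h.length_le; rwa [seg_length] at this
  rw [List.prefix_iff_eq_take] at h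
  rw [← seg_take hlen]
  exact h.symm

lemma cyl_mono {s t : List X} (h : s <+: t) : cyl t ⊆ cyl s := by
  intro ω hω
  have : t <+: seg ω t.length := by rw [hω]
  exact seg_eq_of_prefix (h.trans this)

lemma prefix_seg_of_mem_cyl {ω : ℕ → X} {s : List X} (h : ω ∈ cyl s) {n : ℕ}
    (hn : s.length ≤ n) : s <+: seg ω n := by
  have := seg_prefix ω hn
  rwa [h] at this

lemma mem_cyl_of_prefix_seg {ω : ℕ → X} {w : List X} {n : ℕ} (h : w <+: seg ω n) :
    ω ∈ cyl w := seg_eq_of_prefix h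

/-- Build a path from a coherent chain of lists. -/
lemma chainPath (u : ℕ → List X) (hlen : ∀ n, (u n).length = n)
    (hpref : ∀ n, u n <+: u (n+1)) : ∃ ω : ℕ → X, ∀ n, seg ω n = u n := by
  refine ⟨fun i => (u (i+1))[i]'(by rw [hlen]; omega), ?_⟩
  intro n
  induction n with
  | zero =>
      have : u 0 = [] := List.length_eq_zero_iff.1 (hlen 0)
      simp [seg, this]
  | succ n ih =>
      obtain ⟨tl, htl⟩ := hpref n
      have hlen1 : tl.length = 1 := by
        have := hlen (n+1); rw [← htl] at this
        simp [hlen n] at this; omega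
      obtain ⟨x, rfl⟩ := List.length_eq_one_iff.1 hlen1
      have h1 : (u (n+1))[n]? = some x := by
        have : (u n ++ [x])[(u n).length]? = some x := List.getElem?_concat_length
        rw [hlen n] at this
        rw [← htl]
        exact this
      have h2 : (u (n+1))[n]? = some ((u (n+1))[n]'(by rw [hlen]; omega)) :=
        List.getElem?_eq_getElem _
      have hget : (u (n+1))[n]'(by rw [hlen]; omega) = x := by
        have := h2.symm.trans h1
        exact Option.some.inj this
      rw [seg_succ, ih]
      show u n ++ [(u (n+1))[n]'(by rw [hlen]; omega)] = u (n+1)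
      rw [hget, htl]


/-! ### Upper-expectation lemmas -/

section Qlemmas

variable {X : Type*} [Fintype X] [Nonempty X] {Q : List X → (X → EReal) → EReal}
  (hQ : ∀ s, IsUpperExpectation (Q s)) (s : List X)

lemma bddF_const (c : ℝ) : BddBelowF (fun _ : X => (c:EReal)) := ⟨c, fun _ => le_refl _⟩

lemma bddF_of_nonneg {f : X → EReal} (h : ∀ x, 0 ≤ f x) : BddBelowF f :=
  ⟨0, fun x => by rw [EReal.coe_zero]; exact h x⟩

include hQ

lemma Q_le_const {f : X → EReal} {c : ℝ} (hb : BddBelowF f) (hf : ∀ x, f x ≤ (c:EReal)) :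
    Q s f ≤ (c:EReal) := by
  have := (hQ s).mono f (fun _ => (c:EReal)) hb (bddF_const c) hf
  rwa [(hQ s).const c] at this

lemma Q_const_le {f : X → EReal} {c : ℝ} (hf : ∀ x, (c:EReal) ≤ f x) :
    (c:EReal) ≤ Q s f := by
  have := (hQ s).mono (fun _ => (c:EReal)) f (bddF_const c) ⟨c, hf⟩ hf
  rwa [(hQ s).const c] at this

lemma Q_nonneg {f : X → EReal} (hf : ∀ x, 0 ≤ f x) : 0 ≤ Q s f := by
  have := Q_const_le hQ s (f := f) (c := 0) (fun x => by rw [EReal.coe_zero]; exact hf x)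
  rwa [EReal.coe_zero] at this

lemma Q_add_const {f : X → EReal} (hb : BddBelowF f) (c : ℝ) :
    Q s (fun x => (c:EReal) + f x) ≤ (c:EReal) + Q s f := by
  have := (hQ s).subadd (fun _ => (c:EReal)) f (bddF_const c) hb
  rwa [(hQ s).const c] at this

lemma Q_smul {f : X → EReal} {l : ℝ} (hl : 0 < l) (hf : ∀ x, 0 ≤ f x) :
    Q s (fun x => (l:EReal) * f x) = (l:EReal) * Q s f :=
  (hQ s).homog (l:EReal) (by exact_mod_cast hl) f (bddF_of_nonneg hf) hf

lemma Q_exists_le (f : X → EReal) (hb : BddBelowF f) : ∃ x0, f x0 ≤ Q s f := by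
  obtain ⟨x0, hx0⟩ := Finite.exists_min f
  refine ⟨x0, le_of_forall_rat_lt fun q hq => ?_⟩
  exact Q_const_le hQ s (fun x => ((hq.trans_le (hx0 x)).le))

lemma Q_fin_subadd (F : ℕ → X → EReal) (h0 : ∀ i x, 0 ≤ F i x) (K : ℕ) :
    Q s (fun x => ∑ i ∈ Finset.range K, F i x) ≤ ∑ i ∈ Finset.range K, Q s (F i) := by
  induction K with
  | zero =>
      simp only [Finset.range_zero, Finset.sum_empty]
      have := (hQ s).const 0
      rw [EReal.coe_zero] at this
      exact this.le
  | succ K ih =>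
      have h1 : Q s (fun x => ∑ i ∈ Finset.range (K+1), F i x) ≤
          Q s (F K) + Q s (fun x => ∑ i ∈ Finset.range K, F i x) := by
        have := (hQ s).subadd (F K) (fun x => ∑ i ∈ Finset.range K, F i x)
          (bddF_of_nonneg (h0 K)) (bddF_of_nonneg (fun x => Finset.sum_nonneg fun i _ => h0 i x))
        refine le_trans (le_of_eq ?_) this
        congr 1; funext x
        rw [Finset.sum_range_succ]; exact add_comm _ _
      rw [Finset.sum_range_succ]
      calc Q s (fun x => ∑ i ∈ Finset.range (K+1), F i x)
          ≤ Q s (F K) + Q s (fun x => ∑ i ∈ Finset.range K, F i x) := h1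
        _ ≤ Q s (F K) + ∑ i ∈ Finset.range K, Q s (F i) := by
            exact add_le_add_right ih _
        _ = ∑ i ∈ Finset.range K, Q s (F i) + Q s (F K) := add_comm _ _

/-- Continuity from below of an upper expectation on a finite space. -/
lemma Q_cont (h : ℕ → X → EReal) (hm : ∀ n x, h n x ≤ h (n+1) x) (h0 : ∀ n x, 0 ≤ h n x) :
    Q s (fun x => ⨆ n, h n x) ≤ ⨆ n, Q s (h n) := by
  classical
  have hmono : ∀ {m n : ℕ}, m ≤ n → ∀ x, h m x ≤ h n x := by
    intro m n hmn x
    induction n with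
    | zero => have : m = 0 := by omega
              subst this; exact le_refl _
    | succ n ih =>
        rcases Nat.lt_or_ge m (n+1) with h' | h'
        · exact (ih (by omega)).trans (hm n x)
        · have : m = n + 1 := by omega
          subst this; exact le_refl _
  set H : X → EReal := fun x => ⨆ n, h n x with hHdef
  have hH0 : ∀ x, 0 ≤ H x := fun x => (h0 0 x).trans (le_iSup (fun n => h n x) 0)
  set χ : X → EReal := fun x => if H x = ⊤ then 1 else 0 with hχdef
  have hχ0 : ∀ x, 0 ≤ χ x := by
    intro x; by_cases hx : H x = ⊤ <;> simp [hχdef, hx]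
  rcases (Q_nonneg hQ s hχ0).eq_or_lt with hq0 | hqpos
  · -- Q s χ = 0
    apply le_add_eps
    intro ε hε
    set φ : X → EReal := fun x => if H x = ⊤ then 0 else H x with hφdef
    have hφ0 : ∀ x, 0 ≤ φ x := by
      intro x; by_cases hx : H x = ⊤ <;> simp [hφdef, hx]
      exact hH0 x
    have hx : ∀ x, ∃ n, φ x ≤ h n x + (ε:EReal) := by
      intro x
      by_cases hxt : H x = ⊤
      · refine ⟨0, ?_⟩
        simp only [hφdef, hxt, if_pos]
        exact add_nonneg (h0 0 x) (by exact_mod_cast hε.le)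
      · have hxb : H x ≠ ⊥ := by
          intro hb
          have := hH0 x
          rw [hb] at this
          exact absurd this (by simp)
        have hφx : φ x = H x := by rw [hφdef]; simp [hxt]
        rw [hφx]
        obtain ⟨v, hv⟩ : ∃ v : ℝ, H x = (v:EReal) := by
          lift H x to ℝ using ⟨hxt, hxb⟩ with v hv
          exact ⟨v, rfl⟩
        have hlt : ((v - ε : ℝ) : EReal) < H x := by
          rw [hv, EReal.coe_lt_coe_iff]; linarith
        conv at hlt => rw [hHdef]
        obtain ⟨n, hn⟩ := lt_iSup_iff.1 hlt
        refine ⟨n, ?_⟩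
        rw [hv]
        have hle : ((v:ℝ):EReal) - (ε:EReal) ≤ h n x := by
          rw [← EReal.coe_sub]; exact hn.le
        exact (EReal.sub_le_iff_le_add (by simp) (by simp)).1 hle
    choose nf hnf using hx
    set N := Finset.univ.sup nf with hN
    have hφN : ∀ x, φ x ≤ h N x + (ε:EReal) := fun x =>
      (hnf x).trans (add_le_add_left (hmono (Finset.le_sup (Finset.mem_univ x)) x) _)
    have step1 : Q s H ≤ Q s (fun x => φ x + ⊤ * χ x) := by
      apply (hQ s).mono _ _ ⟨0, fun x => by rw [EReal.coe_zero]; exact hH0 x⟩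
        ⟨0, fun x => by
          rw [EReal.coe_zero]
          exact add_nonneg (hφ0 x) (mul_nonneg le_top (hχ0 x))⟩
      intro x
      by_cases hx : H x = ⊤
      · simp [hφdef, hχdef, hx]
      · simp [hφdef, hχdef, hx]
    have step2 : Q s (fun x => φ x + ⊤ * χ x) ≤ Q s φ + Q s (fun x => ⊤ * χ x) :=
      (hQ s).subadd _ _ ⟨0, fun x => by rw [EReal.coe_zero]; exact hφ0 x⟩
        ⟨0, fun x => by rw [EReal.coe_zero]; exact mul_nonneg le_top (hχ0 x)⟩
    have step3 : Q s (fun x => ⊤ * χ x) = ⊤ * Q s χ :=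
      (hQ s).homog ⊤ (by simp) χ ⟨0, fun x => by rw [EReal.coe_zero]; exact hχ0 x⟩ hχ0
    have step4 : (⊤ : EReal) * Q s χ = 0 := by rw [← hq0]; exact mul_zero _
    have step5 : Q s φ ≤ Q s (h N) + (ε:EReal) := by
      have h6 : Q s (fun x => (ε:EReal) + h N x) ≤ (ε:EReal) + Q s (h N) :=
        Q_add_const hQ s (bddF_of_nonneg (h0 N)) ε
      have h7 : Q s φ ≤ Q s (fun x => (ε:EReal) + h N x) := by
        apply (hQ s).mono _ _ ⟨0, fun x => by rw [EReal.coe_zero]; exact hφ0 x⟩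
          ⟨0, fun x => by
            rw [EReal.coe_zero]
            exact add_nonneg (by exact_mod_cast hε.le) (h0 N x)⟩
          (fun x => (hφN x).trans_eq (add_comm _ _))
      exact (h7.trans h6).trans_eq (add_comm _ _)
    calc Q s H ≤ Q s φ + Q s (fun x => ⊤ * χ x) := step1.trans step2
      _ = Q s φ := by rw [step3, step4, add_zero]
      _ ≤ Q s (h N) + (ε:EReal) := step5
      _ ≤ (⨆ n, Q s (h n)) + (ε:EReal) := add_le_add_left (le_iSup (fun n => Q s (h n)) N) _
  · -- 0 < Q s χ : right side is ⊤
    have hRtop : (⨆ n, Q s (h n)) = ⊤ := by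
      apply eq_top_of_forall_real_le
      intro C
      -- find m > 0 with C ≤ m * Q s χ
      obtain ⟨m, hm0, hmC⟩ : ∃ m : ℝ, 0 < m ∧ (C:EReal) ≤ (m:EReal) * Q s χ := by
        by_cases hqt : Q s χ = ⊤
        · refine ⟨1, one_pos, ?_⟩
          rw [EReal.coe_one, one_mul, hqt]; exact le_top
        · have hqb : Q s χ ≠ ⊥ := by
            intro hb
            rw [hb] at hqpos
            exact absurd hqpos (by simp)
          obtain ⟨q, hq⟩ : ∃ q : ℝ, Q s χ = (q:EReal) := by
            lift Q s χ to ℝ using ⟨hqt, hqb⟩ with q hq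
            exact ⟨q, rfl⟩
          have hq0 : 0 < q := by
            rw [hq] at hqpos; exact_mod_cast hqpos
          refine ⟨max (C/q + 1) 1, lt_of_lt_of_le one_pos (le_max_right _ _), ?_⟩
          rw [hq, ← EReal.coe_mul, EReal.coe_le_coe_iff]
          have h1 : C/q + 1 ≤ max (C/q + 1) 1 := le_max_left _ _
          have h2 : (C/q) * q = C := div_mul_cancel₀ C (ne_of_gt hq0)
          nlinarith [mul_le_mul_of_nonneg_right h1 hq0.le]
      -- find n with m * χ ≤ h n
      have hx : ∀ x, ∃ n, (m:EReal) * χ x ≤ h n x := by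
        intro x
        by_cases hxt : H x = ⊤
        · have : ((m:ℝ):EReal) < H x := by rw [hxt]; exact EReal.coe_lt_top m
          rw [hHdef] at this
          obtain ⟨n, hn⟩ := lt_iSup_iff.1 this
          exact ⟨n, by rw [hχdef]; simp only [if_pos hxt, mul_one]; exact hn.le⟩
        · exact ⟨0, by rw [hχdef]; simp only [if_neg hxt, mul_zero]; exact h0 0 x⟩
      choose nf hnf using hx
      set N := Finset.univ.sup nf with hN
      have hmN : ∀ x, (m:EReal) * χ x ≤ h N x := fun x =>
        (hnf x).trans (hmono (Finset.le_sup (Finset.mem_univ x)) x)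
      calc (C:EReal) ≤ (m:EReal) * Q s χ := hmC
        _ = Q s (fun x => (m:EReal) * χ x) := (Q_smul hQ s hm0 hχ0).symm
        _ ≤ Q s (h N) := (hQ s).mono _ _
            ⟨0, fun x => by
              rw [EReal.coe_zero]
              exact mul_nonneg (by exact_mod_cast hm0.le) (hχ0 x)⟩
            (bddF_of_nonneg (h0 N)) hmN
        _ ≤ ⨆ n, Q s (h n) := le_iSup (fun n => Q s (h n)) N
    rw [hRtop]
    exact le_top

end Qlemmas

/-! ### Supermartingale toolkit -/

section SM

variable {X : Type*} [Fintype X] [Nonempty X] {Q : List X → (X → EReal) → EReal}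
  (hQ : ∀ s, IsUpperExpectation (Q s))

include hQ

lemma smConst (c : ℝ) : IsSupermartingale Q (fun _ => (c:EReal)) :=
  ⟨⟨c, fun _ => le_refl _⟩, fun s => ((hQ s).const c).le⟩

lemma smAdd {M N : List X → EReal} (hM : IsSupermartingale Q M) (hN : IsSupermartingale Q N) :
    IsSupermartingale Q (fun t => M t + N t) := by
  obtain ⟨⟨B1, hB1⟩, hM2⟩ := hM
  obtain ⟨⟨B2, hB2⟩, hN2⟩ := hN
  refine ⟨⟨B1 + B2, fun t => by rw [EReal.coe_add]; exact add_le_add (hB1 t) (hB2 t)⟩,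
    fun t => ?_⟩
  exact ((hQ t).subadd _ _ ⟨B1, fun x => hB1 _⟩ ⟨B2, fun x => hB2 _⟩).trans
    (add_le_add (hM2 t) (hN2 t))

lemma smSmul {M : List X → EReal} {l : ℝ} (hl : 0 < l) (hM0 : ∀ t, 0 ≤ M t)
    (hM : IsSupermartingale Q M) : IsSupermartingale Q (fun t => (l:EReal) * M t) :=
  ⟨⟨0, fun t => by
      rw [EReal.coe_zero]
      exact mul_nonneg (by exact_mod_cast hl.le) (hM0 t)⟩,
   fun t => by
     rw [Q_smul hQ t hl (fun x => hM0 _)]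
     exact mul_le_mul_of_nonneg_left (hM.2 t) (by exact_mod_cast hl.le)⟩

lemma smSum (F : ℕ → List X → EReal) (hsm : ∀ i, IsSupermartingale Q (F i))
    (h0 : ∀ i t, 0 ≤ F i t) :
    IsSupermartingale Q (fun t => ⨆ K, ∑ i ∈ Finset.range K, F i t) := by
  constructor
  · refine ⟨0, fun t => ?_⟩
    rw [EReal.coe_zero]
    exact le_iSup_of_le 0 (by simp)
  · intro t
    have h1 : Q t (fun x => ⨆ K, ∑ i ∈ Finset.range K, F i (t ++ [x])) ≤
        ⨆ K, Q t (fun x => ∑ i ∈ Finset.range K, F i (t ++ [x])) :=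
      Q_cont hQ t _
        (fun K x => Finset.sum_le_sum_of_subset_of_nonneg
          (by simp [Finset.range_subset]; intro _ _; omega) (fun i _ _ => h0 i _))
        (fun K x => Finset.sum_nonneg fun i _ => h0 i _)
    refine h1.trans (iSup_le fun K => ?_)
    refine le_iSup_of_le K ?_
    refine (Q_fin_subadd hQ t _ (fun i x => h0 i _) K).trans ?_
    exact Finset.sum_le_sum fun i _ => (hsm i).2 t

end SM

/-! ### Basic lemmas on the game-theoretic upper expectation -/

section GUE

variable {X : Type*} [Fintype X] [Nonempty X] {Q : List X → (X → EReal) → EReal}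

lemma gUE_le {f : (ℕ → X) → EReal} {s : List X} {M : List X → EReal}
    (hM : IsSupermartingale Q M)
    (hdom : ∀ ω ∈ cyl s, f ω ≤ llim fun n => M (seg ω n)) : gUE Q f s ≤ M s :=
  sInf_le ⟨M, hM, fun ω hω => by rw [liminf_eq_llim]; exact hdom ω hω, rfl⟩

lemma exists_witness_lt {f : (ℕ → X) → EReal} {s : List X} {c : EReal} (h : gUE Q f s < c) :
    ∃ M, IsSupermartingale Q M ∧
      (∀ ω ∈ cyl s, f ω ≤ llim fun n => M (seg ω n)) ∧ M s < c := by
  obtain ⟨y, ⟨M, hM, hdom, rfl⟩, hlt⟩ := sInf_lt_iff.1 h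
  exact ⟨M, hM, fun ω hω => by rw [← liminf_eq_llim]; exact hdom ω hω, hlt⟩

lemma gUE_mono {f g : (ℕ → X) → EReal} {s : List X} (h : ∀ ω ∈ cyl s, f ω ≤ g ω) :
    gUE Q f s ≤ gUE Q g s := by
  apply sInf_le_sInf
  rintro y ⟨M, h1, h2, h3⟩
  exact ⟨M, h1, fun ω hω => (h ω hω).trans (h2 ω hω), h3⟩

variable (hQ : ∀ s, IsUpperExpectation (Q s))

include hQ

/-- Any supermartingale dominating a non-negative variable on `cyl t` is
non-negative at `t` (by following a greedy path downwards). -/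
lemma witness_nonneg {M : List X → EReal} {f : (ℕ → X) → EReal} {t : List X}
    (hM : IsSupermartingale Q M)
    (hdom : ∀ ω ∈ cyl t, f ω ≤ llim fun n => M (seg ω n))
    (hf : ∀ ω ∈ cyl t, 0 ≤ f ω) : 0 ≤ M t := by
  by_contra hneg
  push_neg at hneg
  obtain ⟨⟨B, hB⟩, hMt⟩ := hM
  have step : ∀ l : List X, M (t ++ l) ≤ M t → ∃ x : X, M (t ++ (l ++ [x])) ≤ M t := by
    intro l hl
    obtain ⟨x0, hx0⟩ := Q_exists_le hQ (t ++ l) (fun x => M ((t ++ l) ++ [x])) ⟨B, fun x => hB _⟩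
    refine ⟨x0, ?_⟩
    rw [← List.append_assoc]
    exact hx0.trans ((hMt (t ++ l)).trans hl)
  let w : (n : ℕ) → {l : List X // l.length = n ∧ M (t ++ l) ≤ M t} :=
    fun n => Nat.rec ⟨[], rfl, by simp⟩
      (fun n p => ⟨p.1 ++ [Classical.choose (step p.1 p.2.2)],
        by simp [p.2.1], Classical.choose_spec (step p.1 p.2.2)⟩) n
  have hw : ∀ n, (w (n+1)).1 = (w n).1 ++ [Classical.choose (step (w n).1 (w n).2.2)] :=
    fun n => rfl
  set U : ℕ → List X := fun m =>
    if m ≤ t.length then t.take m else t ++ (w (m - t.length)).1 with hU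
  have hUlen : ∀ m, (U m).length = m := by
    intro m
    simp only [hU]
    split
    · simp; omega
    · simp [(w (m - t.length)).2.1]; omega
  have hUpref : ∀ m, U m <+: U (m+1) := by
    intro m
    simp only [hU]
    rcases Nat.lt_or_ge m t.length with h' | h'
    · rw [if_pos h'.le, if_pos (by omega)]
      have h1 : List.take m t = List.take m (List.take (m+1) t) := by
        rw [List.take_take]
        congr 1
        omega
      rw [h1]
      exact List.take_prefix _ _
    · rcases Nat.eq_or_lt_of_le h' with h'' | h''
      · subst h''
        rw [if_pos (le_refl _), if_neg (by omega), List.take_length]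
        have h3 : t.length + 1 - t.length = 1 := by omega
        rw [h3]
        exact ⟨(w 1).1, rfl⟩
      · rw [if_neg (by omega), if_neg (by omega)]
        have h2 : m + 1 - t.length = (m - t.length) + 1 := by omega
        rw [h2, hw (m - t.length), ← List.append_assoc]
        exact ⟨_, rfl⟩
  obtain ⟨ω, hωseg⟩ := chainPath U hUlen hUpref
  have hωcyl : ω ∈ cyl t := by
    have := hωseg t.length
    simp only [hU] at this
    simp only [le_refl, if_pos, List.take_length] at this
    exact this
  have hMle : ∀ m ≥ t.length, M (seg ω m) ≤ M t := by
    intro m hm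
    rw [hωseg m]
    simp only [hU]
    rcases Nat.eq_or_lt_of_le hm with h'' | h''
    · simp only [← h'', le_refl, if_pos, List.take_length]
    · rw [if_neg (by omega)]
      exact (w (m - t.length)).2.2
  have h1 : llim (fun n => M (seg ω n)) ≤ M t := llim_le_of_eventually_le hMle
  have h2 : (0:EReal) ≤ M t := le_trans (hf ω hωcyl) ((hdom ω hωcyl).trans h1)
  exact absurd h2 (not_le.2 hneg)

lemma gUE_nonneg {f : (ℕ → X) → EReal} {t : List X} (hf : ∀ ω ∈ cyl t, 0 ≤ f ω) :
    0 ≤ gUE Q f t := by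
  apply le_sInf
  rintro y ⟨M, hM, hdom, rfl⟩
  exact witness_nonneg hQ hM
    (fun ω hω => by rw [← liminf_eq_llim]; exact hdom ω hω) hf

/-- The tower inequality. -/
lemma gUE_tower (f : (ℕ → X) → EReal) (hf0 : ∀ ω, 0 ≤ f ω) (t : List X) :
    Q t (fun x => gUE Q f (t ++ [x])) ≤ gUE Q f t := by
  apply le_sInf
  rintro y ⟨M, hM, hdom, rfl⟩
  have hxle : ∀ x, gUE Q f (t ++ [x]) ≤ M (t ++ [x]) := by
    intro x
    refine gUE_le hM (fun ω hω => ?_)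
    have : ω ∈ cyl t := cyl_mono ⟨[x], rfl⟩ hω
    rw [← liminf_eq_llim]
    exact hdom ω this
  have hb1 : BddBelowF (fun x => gUE Q f (t ++ [x])) :=
    ⟨0, fun x => by
      rw [EReal.coe_zero]
      exact gUE_nonneg hQ (fun ω _ => hf0 ω)⟩
  obtain ⟨⟨B, hB⟩, hM2⟩ := hM
  exact ((hQ t).mono _ _ hb1 ⟨B, fun x => hB _⟩ hxle).trans (hM2 t)

/-- Shifting by a real constant. -/
lemma gUE_add_const_le (f : (ℕ → X) → EReal) (r : ℝ) (s : List X) :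
    gUE Q (fun ω => f ω + (r:EReal)) s ≤ gUE Q f s + (r:EReal) := by
  have key : ∀ y ∈ { y | ∃ M : List X → EReal, IsSupermartingale Q M ∧
      (∀ ω ∈ cyl s, f ω ≤ Filter.liminf (fun n => M (seg ω n)) Filter.atTop) ∧ M s = y },
      gUE Q (fun ω => f ω + (r:EReal)) s ≤ y + (r:EReal) := by
    rintro y ⟨M, hM, hdom, rfl⟩
    refine gUE_le (M := fun u => M u + (r:EReal)) ?_ ?_
    · obtain ⟨⟨B, hB⟩, hM2⟩ := hM
      refine ⟨⟨B + r, fun u => by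
        rw [EReal.coe_add]
        exact add_le_add_left (hB u) _⟩, fun u => ?_⟩
      have heq : (fun x => M (u ++ [x]) + (r:EReal)) = (fun x => (r:EReal) + M (u ++ [x])) := by
        funext x; exact add_comm _ _
      calc Q u (fun x => M (u ++ [x]) + (r:EReal))
          = Q u (fun x => (r:EReal) + M (u ++ [x])) := by rw [heq]
        _ ≤ (r:EReal) + Q u (fun x => M (u ++ [x])) := Q_add_const hQ u ⟨B, fun x => hB _⟩ r
        _ ≤ (r:EReal) + M u := add_le_add_right (hM2 u) _
        _ = M u + (r:EReal) := add_comm _ _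
    · intro ω hω
      rw [llim_add_real]
      refine add_le_add_left ?_ _
      rw [← liminf_eq_llim]
      exact hdom ω hω
  -- now conclude: sInf + r
  have h2 : gUE Q (fun ω => f ω + (r:EReal)) s - (r:EReal) ≤ gUE Q f s := by
    apply le_sInf
    intro y hy
    rw [EReal.sub_le_iff_le_add (by simp) (by simp)]
    exact key y hy
  calc gUE Q (fun ω => f ω + (r:EReal)) s
      = gUE Q (fun ω => f ω + (r:EReal)) s - (r:EReal) + (r:EReal) := by
        rw [EReal.sub_add_cancel]
    _ ≤ gUE Q f s + (r:EReal) := add_le_add_left h2 _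

lemma gUE_add_const (f : (ℕ → X) → EReal) (r : ℝ) (s : List X) :
    gUE Q (fun ω => f ω + (r:EReal)) s = gUE Q f s + (r:EReal) := by
  apply le_antisymm (gUE_add_const_le hQ f r s)
  have h1 : gUE Q f s ≤ gUE Q (fun ω => f ω + (r:EReal)) s + ((-r : ℝ):EReal) := by
    have heq : (fun ω => (f ω + (r:EReal)) + ((-r:ℝ):EReal)) = f := by
      funext ω
      rw [EReal.coe_neg, ← sub_eq_add_neg, EReal.add_sub_cancel_right]
    have := gUE_add_const_le hQ (fun ω => f ω + (r:EReal)) (-r) s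
    rw [show (fun ω => (fun ω => f ω + (r:EReal)) ω + ((-r:ℝ):EReal)) = f from heq] at this
    exact this
  rw [EReal.coe_neg, ← sub_eq_add_neg] at h1
  rw [← EReal.le_sub_iff_add_le (Or.inl (by simp)) (Or.inl (by simp))]
  exact h1

end GUE

/-! ### The doubling supermartingale -/

section Doubling

variable {X : Type*} [Fintype X] [Nonempty X] {Q : List X → (X → EReal) → EReal}

/-- A chosen witness for `gUE Q g v < a`, bought at situation `v`. -/
noncomputable def Wit (Q : List X → (X → EReal) → EReal) (g : (ℕ → X) → EReal) (a : ℝ)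
    (v : List X) : List X → EReal :=
  if h : gUE Q g v < ((a:ℝ):EReal) then (exists_witness_lt h).choose else fun _ => 0

lemma Wit_spec {g : (ℕ → X) → EReal} {a : ℝ} {v : List X}
    (h : gUE Q g v < ((a:ℝ):EReal)) :
    IsSupermartingale Q (Wit Q g a v) ∧
      (∀ ω ∈ cyl v, g ω ≤ llim fun n => Wit Q g a v (seg ω n)) ∧
      Wit Q g a v v < ((a:ℝ):EReal) := by
  rw [Wit, dif_pos h]
  exact (exists_witness_lt h).choose_spec

variable (hQ : ∀ u, IsUpperExpectation (Q u))

lemma Wit_nonneg (hQ : ∀ u, IsUpperExpectation (Q u)) {g : (ℕ → X) → EReal} {a : ℝ}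
    (hg0 : ∀ ω, 0 ≤ g ω) {v u : List X}
    (h : gUE Q g v < ((a:ℝ):EReal)) (hvu : v <+: u) : 0 ≤ Wit Q g a v u := by
  obtain ⟨h1, h2, _⟩ := Wit_spec h
  exact witness_nonneg hQ h1 (fun ω hω => h2 ω (cyl_mono hvu hω)) (fun ω _ => hg0 ω)

variable (Q) in
/-- One step of the doubling strategy. -/
noncomputable def dstep (g : (ℕ → X) → EReal) (a b : ℝ) (σ : DSt X) (v : List X) : DSt X :=
  match σ with
  | .wait k => if gUE Q g v < ((a:ℝ):EReal) then .invest k v else .wait k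
  | .invest k w => if ((b:ℝ):EReal) ≤ Wit Q g a w v then .wait (k+1) else .invest k w

variable (Q) in
/-- The state of the doubling strategy at a situation. -/
noncomputable def dst (s : List X) (g : (ℕ → X) → EReal) (a b : ℝ) (v : List X) : DSt X :=
  if h : s <+: v ∧ v ≠ s then
    dstep Q g a b (dst s g a b v.dropLast) v
  else DSt.wait 0
termination_by v.length
decreasing_by
  have hv : v ≠ [] := by
    rintro rfl
    exact h.2 (List.prefix_nil.mp h.1).symm
  rw [List.length_dropLast]
  have := List.length_pos_iff.2 hv
  omega

lemma dst_of_not {s : List X} {g : (ℕ → X) → EReal} {a b : ℝ} {v : List X}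
    (h : ¬ (s <+: v ∧ v ≠ s)) : dst Q s g a b v = DSt.wait 0 := by
  rw [dst, dif_neg h]

lemma dst_base {s : List X} {g : (ℕ → X) → EReal} {a b : ℝ} :
    dst Q s g a b s = DSt.wait 0 :=
  dst_of_not (by simp)

lemma dst_concat {s t : List X} {g : (ℕ → X) → EReal} {a b : ℝ} (h : s <+: t) (x : X) :
    dst Q s g a b (t ++ [x]) = dstep Q g a b (dst Q s g a b t) (t ++ [x]) := by
  have hne : t ++ [x] ≠ s := by
    intro heq
    have h1 := h.length_le
    rw [← heq] at h1
    simp at h1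
  have hpre : s <+: t ++ [x] := h.trans ⟨[x], rfl⟩
  rw [dst, dif_pos ⟨hpre, hne⟩, List.dropLast_concat]

/-- Ratio by which the capital grows in every completed round. -/
noncomputable def dr (a b : ℝ) : ℝ := (a + b)/(2*a)

variable (Q) in
noncomputable def dvalAux (g : (ℕ → X) → EReal) (a b : ℝ) (σ : DSt X) (v : List X) : EReal :=
  match σ with
  | .wait k => ((dr a b ^ k : ℝ) : EReal)
  | .invest k w => ((dr a b ^ k / 2 : ℝ) : EReal) +
      ((dr a b ^ k / (2*a) : ℝ) : EReal) * Wit Q g a w v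

variable (Q) in
/-- The value process of the doubling strategy. -/
noncomputable def dval (s : List X) (g : (ℕ → X) → EReal) (a b : ℝ) (v : List X) : EReal :=
  dvalAux Q g a b (dst Q s g a b v) v

lemma dst_invest_spec {s : List X} {g : (ℕ → X) → EReal} {a b : ℝ} :
    ∀ (n : ℕ) (v : List X), v.length ≤ n → ∀ k w, dst Q s g a b v = DSt.invest k w →
      s <+: w ∧ w <+: v ∧ gUE Q g w < ((a:ℝ):EReal) := by
  intro n
  induction n with
  | zero =>
      intro v hv k w h
      have hnil : v = [] := List.length_eq_zero_iff.1 (le_antisymm hv (Nat.zero_le _))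
      subst hnil
      by_cases hc : s <+: ([]:List X) ∧ ([]:List X) ≠ s
      · exact absurd (List.prefix_nil.mp hc.1).symm hc.2
      · rw [dst_of_not hc] at h
        exact absurd h (by simp)
  | succ n ih =>
      intro v hv k w h
      by_cases hc : s <+: v ∧ v ≠ s
      · have hvne : v ≠ [] := by
          rintro rfl
          exact hc.2 (List.prefix_nil.mp hc.1).symm
        have hlen : v.dropLast.length ≤ n := by
          rw [List.length_dropLast]
          have := List.length_pos_iff.2 hvne
          omega
        rw [dst, dif_pos hc] at h
        rcases hd : dst Q s g a b v.dropLast with k' | ⟨k', w'⟩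
        · rw [hd, dstep] at h
          by_cases hga : gUE Q g v < ((a:ℝ):EReal)
          · rw [if_pos hga] at h
            injection h with h1 h2
            subst h2
            exact ⟨hc.1, List.prefix_refl _, hga⟩
          · rw [if_neg hga] at h
            exact absurd h (by simp)
        · rw [hd, dstep] at h
          by_cases hsell : ((b:ℝ):EReal) ≤ Wit Q g a w' v
          · rw [if_pos hsell] at h
            exact absurd h (by simp)
          · rw [if_neg hsell] at h
            injection h with h1 h2
            subst h2
            obtain ⟨hs1, hs2, hs3⟩ := ih v.dropLast hlen k' w' hd
            exact ⟨hs1, hs2.trans (List.dropLast_prefix v), hs3⟩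
      · rw [dst_of_not hc] at h
        exact absurd h (by simp)


lemma dr_one_lt {a b : ℝ} (ha : 0 < a) (hab : a < b) : 1 < dr a b := by
  rw [dr, lt_div_iff₀ (by linarith)]
  linarith

lemma dr_pos {a b : ℝ} (ha : 0 < a) (hab : a < b) : 0 < dr a b :=
  lt_trans one_pos (dr_one_lt ha hab)

lemma dval_nonneg (hQ : ∀ u, IsUpperExpectation (Q u)) {s : List X} {g : (ℕ → X) → EReal}
    {a b : ℝ} (hg0 : ∀ ω, 0 ≤ g ω) (ha : 0 < a) (hab : a < b) (v : List X) :
    0 ≤ dval Q s g a b v := by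
  rw [dval]
  rcases hd : dst Q s g a b v with k | ⟨k, w⟩ <;> simp only [dvalAux]
  · exact_mod_cast (pow_pos (dr_pos ha hab) k).le
  · obtain ⟨_, hs2, hs3⟩ := dst_invest_spec v.length v (le_refl _) k w hd
    have hWnn := Wit_nonneg hQ hg0 hs3 hs2
    refine add_nonneg ?_ (mul_nonneg ?_ hWnn)
    · exact_mod_cast div_nonneg (pow_nonneg (dr_pos ha hab).le k) (by norm_num)
    · exact_mod_cast div_nonneg (pow_nonneg (dr_pos ha hab).le k) (by linarith)

lemma dval_s {s : List X} {g : (ℕ → X) → EReal} {a b : ℝ} :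
    dval Q s g a b s = ((1:ℝ):EReal) := by
  rw [dval, dst_base]
  simp only [dvalAux, pow_zero]

lemma dval_sm (hQ : ∀ u, IsUpperExpectation (Q u)) {s : List X} {g : (ℕ → X) → EReal}
    {a b : ℝ} (hg0 : ∀ ω, 0 ≤ g ω) (ha : 0 < a) (hab : a < b) :
    IsSupermartingale Q (dval Q s g a b) := by
  have h2a : (0:ℝ) < 2*a := by linarith
  constructor
  · exact ⟨0, fun v => by
      rw [EReal.coe_zero]
      exact dval_nonneg hQ hg0 ha hab v⟩
  · intro t
    by_cases hc : s <+: t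
    · have hstep : ∀ x, dst Q s g a b (t ++ [x]) = dstep Q g a b (dst Q s g a b t) (t ++ [x]) :=
        fun x => dst_concat hc x
      rcases hd : dst Q s g a b t with k | ⟨k, w⟩
      · -- waiting
        have hval : dval Q s g a b t = ((dr a b ^ k : ℝ):EReal) := by
          rw [dval, hd]; simp only [dvalAux]
        have hch : ∀ x, dval Q s g a b (t ++ [x]) ≤ ((dr a b ^ k : ℝ):EReal) := by
          intro x
          rw [dval, hstep x, hd]
          simp only [dstep]
          by_cases hga : gUE Q g (t ++ [x]) < ((a:ℝ):EReal)
          · rw [if_pos hga]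
            simp only [dvalAux]
            have hWle : Wit Q g a (t++[x]) (t++[x]) ≤ ((a:ℝ):EReal) := (Wit_spec hga).2.2.le
            have hid : ((dr a b ^ k / 2 : ℝ):EReal) + ((dr a b ^ k / (2*a) : ℝ):EReal) * ((a:ℝ):EReal)
                = ((dr a b ^ k : ℝ):EReal) := by
              rw [← EReal.coe_mul, ← EReal.coe_add]
              congr 1
              field_simp
              ring
            calc ((dr a b ^ k / 2 : ℝ):EReal) + ((dr a b ^ k / (2*a) : ℝ):EReal) * Wit Q g a (t++[x]) (t++[x])
                ≤ ((dr a b ^ k / 2 : ℝ):EReal) + ((dr a b ^ k / (2*a) : ℝ):EReal) * ((a:ℝ):EReal) := by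
                  refine add_le_add_right (mul_le_mul_of_nonneg_left hWle ?_) _
                  exact_mod_cast div_nonneg (pow_nonneg (dr_pos ha hab).le k) (by linarith)
              _ = ((dr a b ^ k : ℝ):EReal) := hid
          · rw [if_neg hga]
            simp only [dvalAux]
            exact le_refl _
        rw [hval]
        exact Q_le_const hQ t
          ⟨0, fun x => by rw [EReal.coe_zero]; exact dval_nonneg hQ hg0 ha hab _⟩ hch
      · -- invested
        obtain ⟨hs1, hs2, hs3⟩ := dst_invest_spec t.length t (le_refl _) k w hd
        obtain ⟨hWsm, hWdom, hWval⟩ := Wit_spec hs3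
        have hc2 : (0:ℝ) < dr a b ^ k / (2*a) := div_pos (pow_pos (dr_pos ha hab) k) h2a
        have hWnnc : ∀ x, 0 ≤ Wit Q g a w (t ++ [x]) := fun x =>
          Wit_nonneg hQ hg0 hs3 (hs2.trans ⟨[x], rfl⟩)
        have hval : dval Q s g a b t =
            ((dr a b ^ k / 2 : ℝ):EReal) + ((dr a b ^ k / (2*a) : ℝ):EReal) * Wit Q g a w t := by
          rw [dval, hd]; simp only [dvalAux]
        have hch : ∀ x, dval Q s g a b (t ++ [x]) ≤
            ((dr a b ^ k / 2 : ℝ):EReal) + ((dr a b ^ k / (2*a) : ℝ):EReal) * Wit Q g a w (t ++ [x]) := by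
          intro x
          rw [dval, hstep x, hd]
          simp only [dstep]
          by_cases hsell : ((b:ℝ):EReal) ≤ Wit Q g a w (t ++ [x])
          · rw [if_pos hsell]
            simp only [dvalAux]
            have hid : ((dr a b ^ (k+1) : ℝ):EReal)
                = ((dr a b ^ k / 2 : ℝ):EReal) + ((dr a b ^ k / (2*a) : ℝ):EReal) * ((b:ℝ):EReal) := by
              rw [← EReal.coe_mul, ← EReal.coe_add]
              congr 1
              rw [pow_succ, dr]
              field_simp
            rw [hid]
            refine add_le_add_right (mul_le_mul_of_nonneg_left hsell ?_) _
            exact_mod_cast hc2.le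
          · rw [if_neg hsell]
            simp only [dvalAux]
            exact le_refl _
        have hQb : Q t (fun x => dval Q s g a b (t++[x])) ≤
            Q t (fun x => ((dr a b ^ k / 2 : ℝ):EReal) +
              ((dr a b ^ k / (2*a) : ℝ):EReal) * Wit Q g a w (t++[x])) := by
          refine (hQ t).mono _ _ ?_ ?_ hch
          · exact ⟨0, fun x => by rw [EReal.coe_zero]; exact dval_nonneg hQ hg0 ha hab _⟩
          · refine ⟨0, fun x => ?_⟩
            rw [EReal.coe_zero]
            refine add_nonneg ?_ (mul_nonneg ?_ (hWnnc x))
            · exact_mod_cast div_nonneg (pow_nonneg (dr_pos ha hab).le k) (by norm_num)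
            · exact_mod_cast hc2.le
        have hQ2 : Q t (fun x => ((dr a b ^ k / 2 : ℝ):EReal) +
              ((dr a b ^ k / (2*a) : ℝ):EReal) * Wit Q g a w (t++[x])) ≤
            ((dr a b ^ k / 2 : ℝ):EReal) + ((dr a b ^ k / (2*a) : ℝ):EReal) * Wit Q g a w t := by
          have hbd : BddBelowF (fun x => ((dr a b ^ k / (2*a) : ℝ):EReal) * Wit Q g a w (t++[x])) :=
            ⟨0, fun x => by
              rw [EReal.coe_zero]
              exact mul_nonneg (by exact_mod_cast hc2.le) (hWnnc x)⟩
          calc Q t (fun x => ((dr a b ^ k / 2 : ℝ):EReal) +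
                ((dr a b ^ k / (2*a) : ℝ):EReal) * Wit Q g a w (t++[x]))
              ≤ ((dr a b ^ k / 2 : ℝ):EReal) +
                Q t (fun x => ((dr a b ^ k / (2*a) : ℝ):EReal) * Wit Q g a w (t++[x])) :=
                Q_add_const hQ t hbd _
            _ = ((dr a b ^ k / 2 : ℝ):EReal) +
                ((dr a b ^ k / (2*a) : ℝ):EReal) * Q t (fun x => Wit Q g a w (t++[x])) := by
                rw [Q_smul hQ t hc2 hWnnc]
            _ ≤ ((dr a b ^ k / 2 : ℝ):EReal) +
                ((dr a b ^ k / (2*a) : ℝ):EReal) * Wit Q g a w t := by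
                refine add_le_add_right (mul_le_mul_of_nonneg_left (hWsm.2 t) ?_) _
                exact_mod_cast hc2.le
        rw [hval]
        exact hQb.trans hQ2
    · -- off the subtree of s
      have hself : dst Q s g a b t = DSt.wait 0 := dst_of_not (fun h => hc h.1)
      have hchild : ∀ x : X, dst Q s g a b (t ++ [x]) = DSt.wait 0 := by
        intro x
        apply dst_of_not
        rintro ⟨h1, h2⟩
        rcases List.prefix_concat_iff.1 h1 with h3 | h3
        · exact h2 h3.symm
        · exact hc h3
      have heq : (fun x => dval Q s g a b (t ++ [x])) = fun _ : X => ((dr a b ^ 0 : ℝ) : EReal) := by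
        funext x
        rw [dval, hchild x]
        simp only [dvalAux]
      rw [heq, dval, hself]
      simp only [dvalAux]
      exact ((hQ t).const _).le

/-- On frequently-cheap paths with `b < g ω`, the doubling process blows up. -/
lemma dval_blowup (hQ : ∀ u, IsUpperExpectation (Q u)) {s : List X} {g : (ℕ → X) → EReal}
    {a b : ℝ} (hg0 : ∀ ω, 0 ≤ g ω) (ha : 0 < a) (hab : a < b)
    {ω : ℕ → X} (hω : ω ∈ cyl s)
    (hfreq : ∀ n, ∃ m ≥ n, gUE Q g (seg ω m) < ((a:ℝ):EReal))
    (hgb : ((b:ℝ):EReal) < g ω) :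
    ∀ C : ℝ, ∃ m0, ∀ m ≥ m0, (C:EReal) ≤ dval Q s g a b (seg ω m) := by
  classical
  set σ : ℕ → DSt X := fun m => dst Q s g a b (seg ω m) with hσ
  have hσstep : ∀ m, s.length ≤ m → σ (m+1) = dstep Q g a b (σ m) (seg ω (m+1)) := by
    intro m hm
    show dst Q s g a b (seg ω (m+1)) = dstep Q g a b (dst Q s g a b (seg ω m)) (seg ω (m+1))
    rw [seg_succ]
    exact dst_concat (prefix_seg_of_mem_cyl hω hm) (ω m)
  -- the round counter is non-decreasing
  have hkstep : ∀ m, s.length ≤ m → kOf (σ m) ≤ kOf (σ (m+1)) := by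
    intro m hm
    rw [hσstep m hm]
    rcases σ m with k | ⟨k, w⟩ <;> simp only [dstep]
    · split <;> simp [kOf]
    · split <;> simp [kOf]
  have hkmono : ∀ m m', s.length ≤ m → m ≤ m' → kOf (σ m) ≤ kOf (σ m') := by
    intro m m' hm hmm
    induction m' with
    | zero => have : m = 0 := by omega
              subst this; exact le_refl _
    | succ m' ih =>
        rcases Nat.lt_or_ge m (m'+1) with h' | h'
        · exact (ih (by omega)).trans (hkstep m' (by omega))
        · have : m = m' + 1 := by omega
          subst this; exact le_refl _
  -- from an invested state, a sell happens
  have hinc2 : ∀ m k w, s.length ≤ m → σ m = DSt.invest k w →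
      ∃ m' > m, kOf (σ m') = k + 1 := by
    intro m k w hm hinv
    obtain ⟨_, hs2, hs3⟩ := dst_invest_spec (seg ω m).length (seg ω m)
      (le_refl _) k w hinv
    have hωw : ω ∈ cyl w := mem_cyl_of_prefix_seg hs2
    obtain ⟨hWsm, hWdom, _⟩ := Wit_spec hs3
    obtain ⟨n0, hn0⟩ := eventually_of_lt_llim (lt_of_lt_of_le hgb (hWdom ω hωw))
    have hex : ∃ j, σ (m+1+j) ≠ DSt.invest k w := by
      by_contra hall
      push_neg at hall
      set m1 := max n0 m with hm1
      have hm1m : m ≤ m1 := le_max_right _ _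
      have hσm1 : σ m1 = DSt.invest k w := by
        rcases Nat.eq_or_lt_of_le hm1m with h' | h'
        · rw [← h']; exact hinv
        · have := hall (m1 - m - 1)
          have heq : m + 1 + (m1 - m - 1) = m1 := by omega
          rwa [heq] at this
      have hsell : ((b:ℝ):EReal) ≤ Wit Q g a w (seg ω (m1+1)) :=
        (hn0 (m1+1) (by omega)).le
      have : σ (m1+1) = DSt.wait (k+1) := by
        rw [hσstep m1 (by omega), hσm1]
        simp only [dstep]
        rw [if_pos hsell]
      have h2 := hall (m1 - m)
      have heq : m + 1 + (m1 - m) = m1 + 1 := by omega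
      rw [heq, this] at h2
      exact absurd h2 (by simp)
    set j0 := Nat.find hex with hj0
    have hPj0 := Nat.find_spec hex
    have hprev : σ (m + j0) = DSt.invest k w := by
      rcases Nat.eq_zero_or_pos j0 with h' | h'
      · rw [h']; simpa using hinv
      · have := Nat.find_min hex (m := j0 - 1) (by omega)
        push_neg at this
        have heq : m + 1 + (j0 - 1) = m + j0 := by omega
        rwa [heq] at this
    refine ⟨m + 1 + j0, by omega, ?_⟩
    have hσm' : σ (m+1+j0) = dstep Q g a b (σ (m+j0)) (seg ω (m+1+j0)) := by
      have heq : m + 1 + j0 = (m + j0) + 1 := by omega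
      rw [heq]
      exact hσstep (m+j0) (by omega)
    rw [hσm', hprev] at hPj0 ⊢
    simp only [dstep] at hPj0 ⊢
    split at hPj0
    · next hs => rw [if_pos hs]; simp [kOf]
    · exact absurd rfl hPj0
  -- from a waiting state, an investment happens
  have hinc1 : ∀ m k, s.length ≤ m → σ m = DSt.wait k →
      ∃ m' > m, ∃ w', σ m' = DSt.invest k w' := by
    intro m k hm hwait
    have hex : ∃ j, σ (m+1+j) ≠ DSt.wait k := by
      by_contra hall
      push_neg at hall
      obtain ⟨m1, hm1, hlta⟩ := hfreq (m+1)
      have hσm1' : σ (m1 - 1) = DSt.wait k := by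
        rcases Nat.eq_or_lt_of_le hm1 with h' | h'
        · have : m1 - 1 = m := by omega
          rw [this]; exact hwait
        · have := hall (m1 - 1 - (m+1))
          have heq : m + 1 + (m1 - 1 - (m+1)) = m1 - 1 := by omega
          rwa [heq] at this
      have : σ m1 = DSt.invest k (seg ω m1) := by
        have heq : m1 = (m1 - 1) + 1 := by omega
        rw [heq, hσstep (m1-1) (by omega), hσm1']
        simp only [dstep]
        rw [heq] at hlta
        rw [if_pos hlta]
      have h2 := hall (m1 - (m+1))
      have heq : m + 1 + (m1 - (m+1)) = m1 := by omega
      rw [heq, this] at h2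
      exact absurd h2 (by simp)
    set j0 := Nat.find hex with hj0
    have hPj0 := Nat.find_spec hex
    have hprev : σ (m + j0) = DSt.wait k := by
      rcases Nat.eq_zero_or_pos j0 with h' | h'
      · rw [h']; simpa using hwait
      · have := Nat.find_min hex (m := j0 - 1) (by omega)
        push_neg at this
        have heq : m + 1 + (j0 - 1) = m + j0 := by omega
        rwa [heq] at this
    refine ⟨m + 1 + j0, by omega, ?_⟩
    have hσm' : σ (m+1+j0) = dstep Q g a b (σ (m+j0)) (seg ω (m+1+j0)) := by
      have heq : m + 1 + j0 = (m + j0) + 1 := by omega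
      rw [heq]
      exact hσstep (m+j0) (by omega)
    rw [hσm', hprev] at hPj0 ⊢
    simp only [dstep] at hPj0 ⊢
    split at hPj0
    · next hs => rw [if_pos hs]; exact ⟨_, rfl⟩
    · exact absurd rfl hPj0
  -- the round counter is unbounded
  have hinc : ∀ m, s.length ≤ m → ∃ m' > m, kOf (σ m) < kOf (σ m') := by
    intro m hm
    rcases hd : σ m with k | ⟨k, w⟩
    · obtain ⟨m', hm', w', hw'⟩ := hinc1 m k hm hd
      obtain ⟨m'', hm'', hk''⟩ := hinc2 m' k w' (by omega) hw'
      refine ⟨m'', by omega, ?_⟩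
      rw [hk'']
      simp [kOf]
    · obtain ⟨m'', hm'', hk''⟩ := hinc2 m k w hm hd
      refine ⟨m'', by omega, ?_⟩
      rw [hk'']
      simp [kOf]
  have hunb : ∀ K : ℕ, ∃ m, s.length ≤ m ∧ K ≤ kOf (σ m) := by
    intro K
    induction K with
    | zero => exact ⟨s.length, le_refl _, Nat.zero_le _⟩
    | succ K ih =>
        obtain ⟨m, hm, hK⟩ := ih
        obtain ⟨m', hm', hlt⟩ := hinc m hm
        exact ⟨m', by omega, by omega⟩
  -- value dominates half the current capital
  have hhalf : ∀ m, s.length ≤ m →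
      ((dr a b ^ (kOf (σ m)) / 2 : ℝ):EReal) ≤ dval Q s g a b (seg ω m) := by
    intro m hm
    rw [dval]
    rcases hd : dst Q s g a b (seg ω m) with k | ⟨k, w⟩
    · simp only [dvalAux]
      have hkk : kOf (σ m) = k := by
        show kOf (dst Q s g a b (seg ω m)) = k
        rw [hd]; rfl
      rw [hkk, EReal.coe_le_coe_iff]
      have : (0:ℝ) < dr a b ^ k := pow_pos (dr_pos ha hab) k
      linarith
    · simp only [dvalAux]
      have hkk : kOf (σ m) = k := by
        show kOf (dst Q s g a b (seg ω m)) = k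
        rw [hd]; rfl
      rw [hkk]
      obtain ⟨_, hs2, hs3⟩ := dst_invest_spec (seg ω m).length (seg ω m) (le_refl _) k w hd
      refine le_add_of_nonneg_right (mul_nonneg ?_ (Wit_nonneg hQ hg0 hs3 hs2))
      exact_mod_cast div_nonneg (pow_nonneg (dr_pos ha hab).le k) (by linarith)
  -- conclude
  intro C
  obtain ⟨K, hK⟩ := pow_unbounded_of_one_lt (2*C) (dr_one_lt ha hab)
  obtain ⟨m0, hm0s, hm0K⟩ := hunb K
  refine ⟨m0, fun m hm => ?_⟩
  have hkm : K ≤ kOf (σ m) := hm0K.trans (hkmono m0 m hm0s hm)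
  have h1 : (C:EReal) ≤ ((dr a b ^ (kOf (σ m)) / 2 : ℝ):EReal) := by
    rw [EReal.coe_le_coe_iff]
    have h2 : dr a b ^ K ≤ dr a b ^ (kOf (σ m)) :=
      pow_le_pow_right₀ (dr_one_lt ha hab).le hkm
    linarith
  exact h1.trans (hhalf m (le_trans hm0s hm))

end Doubling

/-! ### The core continuity bound -/

section Core

variable {X : Type*} [Fintype X] [Nonempty X] {Q : List X → (X → EReal) → EReal}
  (hQ : ∀ u, IsUpperExpectation (Q u))

include hQ

lemma core_mct (s : List X) (h : ℕ → (ℕ → X) → EReal)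
    (hmono : ∀ N ω, h N ω ≤ h (N+1) ω) (h0 : ∀ N ω, 0 ≤ h N ω) :
    gUE Q (fun ω => ⨆ N, h N ω) s ≤ ⨆ N, gUE Q (h N) s := by
  classical
  by_cases hctop : (⨆ N, gUE Q (h N) s) = ⊤
  · rw [hctop]; exact le_top
  have hgUEnn : ∀ N t, 0 ≤ gUE Q (h N) t := fun N t => gUE_nonneg hQ (fun ω _ => h0 N ω)
  have hgUEmono : ∀ N t, gUE Q (h N) t ≤ gUE Q (h (N+1)) t := fun N t =>
    gUE_mono (fun ω _ => hmono N ω)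
  have hc0 : (0:EReal) ≤ ⨆ N, gUE Q (h N) s :=
    le_trans (hgUEnn 0 s) (le_iSup (fun N => gUE Q (h N) s) 0)
  have hcb : (⨆ N, gUE Q (h N) s) ≠ ⊥ := by
    intro hb
    rw [hb] at hc0
    exact absurd hc0 (by simp)
  obtain ⟨cr, hcr⟩ : ∃ cr : ℝ, (⨆ N, gUE Q (h N) s) = (cr:EReal) := by
    lift (⨆ N, gUE Q (h N) s) to ℝ using ⟨hctop, hcb⟩ with cr
    exact ⟨cr, rfl⟩
  rw [hcr]
  apply le_add_eps
  intro ε hε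
  -- the tower process
  set R : List X → EReal := fun t => ⨆ N, gUE Q (h N) t with hR
  have hR0 : ∀ t, 0 ≤ R t := fun t =>
    le_trans (hgUEnn 0 t) (le_iSup (fun N => gUE Q (h N) t) 0)
  have hRsm : IsSupermartingale Q R := by
    constructor
    · exact ⟨0, fun t => by rw [EReal.coe_zero]; exact hR0 t⟩
    · intro t
      have h1 : Q t (fun x => ⨆ N, gUE Q (h N) (t ++ [x])) ≤
          ⨆ N, Q t (fun x => gUE Q (h N) (t ++ [x])) :=
        Q_cont hQ t (fun N x => gUE Q (h N) (t ++ [x]))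
          (fun N x => hgUEmono N _) (fun N x => hgUEnn N _)
      exact h1.trans (iSup_le fun N => le_iSup_of_le N (gUE_tower hQ (h N) (h0 N) t))
  -- enumeration of corrections
  set e : ℕ ≃ ℕ × ℚ × ℚ := (Denumerable.eqv (ℕ × ℚ × ℚ)).symm with he
  set w : ℕ → ℝ := fun i => ε / 2^(i+1) with hw
  have hwpos : ∀ i, 0 < w i := fun i => div_pos hε (by positivity)
  set G : ℕ → List X → EReal := fun i =>
    if 0 < (((e i).2.1:ℚ):ℝ) ∧ (((e i).2.1:ℚ):ℝ) < (((e i).2.2:ℚ):ℝ)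
    then dval Q s (h (e i).1) (((e i).2.1:ℚ):ℝ) (((e i).2.2:ℚ):ℝ)
    else fun _ => ((1:ℝ):EReal) with hG
  have hGprop : ∀ i, IsSupermartingale Q (G i) ∧ (∀ t, 0 ≤ G i t) ∧ G i s = ((1:ℝ):EReal) := by
    intro i
    simp only [hG]
    by_cases hpq : 0 < (((e i).2.1:ℚ):ℝ) ∧ (((e i).2.1:ℚ):ℝ) < (((e i).2.2:ℚ):ℝ)
    · rw [if_pos hpq]
      exact ⟨dval_sm hQ (h0 _) hpq.1 hpq.2,
        fun t => dval_nonneg hQ (h0 _) hpq.1 hpq.2 t, dval_s⟩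
    · rw [if_neg hpq]
      exact ⟨smConst hQ 1, fun t => by rw [← EReal.coe_zero]; exact_mod_cast zero_le_one, rfl⟩
  set F : ℕ → List X → EReal := fun i t => ((w i:ℝ):EReal) * G i t with hF
  have hFsm : ∀ i, IsSupermartingale Q (F i) := fun i =>
    smSmul hQ (hwpos i) (hGprop i).2.1 (hGprop i).1
  have hF0 : ∀ i t, 0 ≤ F i t := fun i t =>
    mul_nonneg (by exact_mod_cast (hwpos i).le) ((hGprop i).2.1 t)
  have hFs : ∀ i, F i s = ((w i:ℝ):EReal) := by
    intro i
    simp only [hF, (hGprop i).2.2]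
    rw [← EReal.coe_mul, mul_one]
  set T : List X → EReal := fun t => ⨆ K, ∑ i ∈ Finset.range K, F i t with hT
  have hTsm : IsSupermartingale Q T := smSum hQ F hFsm hF0
  have hT0 : ∀ t, 0 ≤ T t := fun t => le_iSup_of_le 0 (by simp)
  set S : List X → EReal := fun t => R t + T t with hS
  have hSsm : IsSupermartingale Q S := smAdd hQ hRsm hTsm
  -- value bound at s
  have hTs : T s ≤ (ε:EReal) := by
    refine iSup_le fun K => ?_
    have h1 : ∑ i ∈ Finset.range K, F i s = ((∑ i ∈ Finset.range K, w i : ℝ):EReal) := by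
      rw [coe_finset_sum]
      exact Finset.sum_congr rfl (fun i _ => hFs i)
    rw [h1, EReal.coe_le_coe_iff]
    have h2 : ∑ i ∈ Finset.range K, w i = ε * ((∑ i ∈ Finset.range K, (1/2:ℝ)^i) * (1/2)) := by
      rw [Finset.sum_mul, Finset.mul_sum]
      refine Finset.sum_congr rfl fun i _ => ?_
      rw [hw]
      simp only [one_div, inv_pow]
      rw [pow_succ]
      ring
    rw [h2]
    have h3 := sum_geometric_two_le K
    nlinarith
  have hSs : S s ≤ ((cr:ℝ):EReal) + (ε:EReal) := by
    show R s + T s ≤ ((cr:ℝ):EReal) + (ε:EReal)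
    refine add_le_add ?_ hTs
    show (⨆ N, gUE Q (h N) s) ≤ ((cr:ℝ):EReal)
    rw [hcr]
  -- domination
  have hdom : ∀ ω ∈ cyl s, (⨆ N, h N ω) ≤ llim fun n => S (seg ω n) := by
    intro ω hω
    by_cases hgood : ∀ N, h N ω ≤ llim fun n => gUE Q (h N) (seg ω n)
    · refine iSup_le fun N => (hgood N).trans (llim_mono fun n => ?_)
      calc gUE Q (h N) (seg ω n) ≤ R (seg ω n) := le_iSup (fun N => gUE Q (h N) (seg ω n)) N
        _ ≤ S (seg ω n) := le_add_of_nonneg_right (hT0 _)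
    · push_neg at hgood
      obtain ⟨N, hN⟩ := hgood
      have hll0 : (0:EReal) ≤ llim fun n => gUE Q (h N) (seg ω n) :=
        le_llim_of_eventually_le (m0 := 0) (fun m _ => hgUEnn N _)
      obtain ⟨q2, hq2a, hq2b⟩ := EReal.lt_iff_exists_rat_btwn.1 hN
      obtain ⟨q1, hq1a, hq1b⟩ := EReal.lt_iff_exists_rat_btwn.1 hq2a
      have hq1pos : 0 < ((q1:ℚ):ℝ) := by
        have h1 : (0:EReal) < ((q1:ℝ):EReal) := lt_of_le_of_lt hll0 hq1a
        exact_mod_cast h1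
      have hq12 : ((q1:ℚ):ℝ) < ((q2:ℚ):ℝ) := by exact_mod_cast hq1b
      set i0 := e.symm (N, q1, q2) with hi0
      have hei0 : e i0 = (N, q1, q2) := e.apply_symm_apply _
      have hGi0 : G i0 = dval Q s (h N) ((q1:ℚ):ℝ) ((q2:ℚ):ℝ) := by
        simp only [hG, hei0]
        rw [if_pos ⟨hq1pos, hq12⟩]
      have hblow := dval_blowup hQ (h0 N) hq1pos hq12 hω
        (frequently_of_llim_lt hq1a) hq2b
      have hSF : ∀ t, ((w i0:ℝ):EReal) * dval Q s (h N) ((q1:ℚ):ℝ) ((q2:ℚ):ℝ) t ≤ S t := by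
        intro t
        have h1 : F i0 t ≤ ∑ i ∈ Finset.range (i0+1), F i t :=
          Finset.single_le_sum (f := fun i => F i t) (fun i _ => hF0 i t)
            (Finset.self_mem_range_succ i0)
        have h2 : F i0 t = ((w i0:ℝ):EReal) * dval Q s (h N) ((q1:ℚ):ℝ) ((q2:ℚ):ℝ) t := by
          simp only [hF, hGi0]
        rw [← h2]
        refine h1.trans (le_trans (le_iSup (fun K => ∑ i ∈ Finset.range K, F i t) (i0+1)) ?_)
        exact le_add_of_nonneg_left (hR0 t)
      have htop : llim (fun n => S (seg ω n)) = ⊤ := by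
        apply llim_eq_top
        intro C
        obtain ⟨m0, hm0⟩ := hblow (C / w i0)
        refine ⟨m0, fun m hm => ?_⟩
        have h1 := hm0 m hm
        have h2 : (C:EReal) = ((w i0:ℝ):EReal) * ((C / w i0 : ℝ):EReal) := by
          rw [← EReal.coe_mul]
          congr 1
          field_simp
          rw [mul_div_cancel_right₀ _ (hwpos i0).ne']
        rw [h2]
        refine le_trans (mul_le_mul_of_nonneg_left h1 (by exact_mod_cast (hwpos i0).le)) ?_
        exact hSF (seg ω m)
      rw [htop]
      exact le_top
  have hfin : gUE Q (fun ω => ⨆ N, h N ω) s ≤ S s := gUE_le hSsm hdom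
  exact hfin.trans hSs

end Core
end Fatou18

open Fatou18

/-- Lemma 10 (Fatou's lemma): for a uniformly bounded-below sequence of
extended-real variables, `Ē_V(liminf_n f_n | s) ≤ liminf_n Ē_V(f_n | s)`. -/
theorem stmt18 {X : Type*} [Fintype X] [Nonempty X]
    (Q : List X → (X → EReal) → EReal) (hQ : ∀ s, IsUpperExpectation (Q s))
    (s : List X) (fn : ℕ → (ℕ → X) → EReal)
    (hb : ∃ M : ℝ, ∀ n ω, (M : EReal) ≤ fn n ω) :
    gUE Q (fun ω => Filter.liminf (fun n => fn n ω) atTop) s ≤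
      Filter.liminf (fun n => gUE Q (fn n) s) atTop := by
  classical
  obtain ⟨B, hB⟩ := hb
  set g : ℕ → (ℕ → X) → EReal := fun n ω => fn n ω - (B:EReal) with hg
  have hgnn : ∀ n ω, 0 ≤ g n ω := by
    intro n ω
    simp only [hg]
    rw [EReal.le_sub_iff_add_le (Or.inl (by simp)) (Or.inl (by simp)), zero_add]
    exact hB n ω
  have hgfn : ∀ n ω, g n ω + (B:EReal) = fn n ω := by
    intro n ω
    simp only [hg]
    exact EReal.sub_add_cancel
  set h : ℕ → (ℕ → X) → EReal := fun N ω => ⨅ k, g (N + k) ω with hh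
  have hhmono : ∀ N ω, h N ω ≤ h (N+1) ω := by
    intro N ω
    simp only [hh]
    refine le_iInf fun k => iInf_le_of_le (k+1) (le_of_eq ?_)
    rw [show N + (k+1) = N + 1 + k from by omega]
  have hh0 : ∀ N ω, 0 ≤ h N ω := fun N ω => le_iInf fun k => hgnn _ ω
  have hcore := core_mct hQ s h hhmono hh0
  have hsup : (fun ω => ⨆ N, h N ω) = fun ω => llim (fun n => g n ω) := by
    funext ω
    rw [llim]
  have h1 : ∀ N, gUE Q (h N) s ≤ ⨅ k, gUE Q (g (N + k)) s := fun N =>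
    le_iInf fun k => gUE_mono (fun ω _ => iInf_le (fun k => g (N + k) ω) k)
  have h2 : (⨆ N, gUE Q (h N) s) ≤ llim (fun n => gUE Q (g n) s) := by
    rw [llim]
    exact iSup_mono fun N => (h1 N).trans (le_iInf fun k =>
      iInf_le (fun k => gUE Q (g (N + k)) s) k)
  have h3 : ∀ n, gUE Q (fn n) s = gUE Q (g n) s + (B:EReal) := by
    intro n
    have heq : (fun ω => g n ω + (B:EReal)) = fn n := funext fun ω => hgfn n ω
    have := gUE_add_const hQ (g n) B s
    rw [heq] at this
    exact this
  have h4 : (fun ω => Filter.liminf (fun n => fn n ω) Filter.atTop)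
      = fun ω => (llim fun n => g n ω) + (B:EReal) := by
    funext ω
    rw [liminf_eq_llim]
    have heq : (fun n => fn n ω) = fun n => g n ω + (B:EReal) :=
      funext fun n => (hgfn n ω).symm
    rw [heq, llim_add_real]
  calc gUE Q (fun ω => Filter.liminf (fun n => fn n ω) Filter.atTop) s
      = gUE Q (fun ω => (llim fun n => g n ω) + (B:EReal)) s := by rw [h4]
    _ = gUE Q (fun ω => llim fun n => g n ω) s + (B:EReal) := gUE_add_const hQ _ B s
    _ = gUE Q (fun ω => ⨆ N, h N ω) s + (B:EReal) := by rw [hsup]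
    _ ≤ (⨆ N, gUE Q (h N) s) + (B:EReal) := add_le_add_left hcore _
    _ ≤ llim (fun n => gUE Q (g n) s) + (B:EReal) := add_le_add_left h2 _
    _ = llim (fun n => gUE Q (g n) s + (B:EReal)) := (llim_add_real _ B).symm
    _ = llim (fun n => gUE Q (fn n) s) := by
        rw [show (fun n => gUE Q (g n) s + (B:EReal)) = fun n => gUE Q (fn n) s from
          funext fun n => (h3 n).symm]
    _ = Filter.liminf (fun n => gUE Q (fn n) s) Filter.atTop := (liminf_eq_llim _).symm
end

section
/- Let X be a finite non-empty set with an imprecise probability tree and associated game-theoretic upper expectation Ē_V. For any situation s ∈ X* and any non-increasing sequence {f_n}_{n∈ℕ₀} of gambles on Ω such that each f_n is n-measurable and the sequence converges pointwise to a variable f : Ω → ℝ̄, one has Ē_V(f|s) = lim_{n→∞} Ē_V(f_n|s). -/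
open Filter Topology

-- ===== auxiliary lemmas =====

lemma seg_length {X : Type*} (ω : ℕ → X) (n : ℕ) : (seg ω n).length = n :=
  List.length_ofFn

lemma seg_take {X : Type*} (ω : ℕ → X) {k m : ℕ} (h : k ≤ m) :
    (seg ω m).take k = seg ω k := by
  apply List.ext_getElem
  · simp [seg, h]
  · intro i h1 h2
    simp [seg]

noncomputable def extL {X : Type*} [Nonempty X] (p : List X) : ℕ → X :=
  fun i => p.getD i (Classical.arbitrary X)

lemma seg_extL {X : Type*} [Nonempty X] (p : List X) : seg (extL p) p.length = p := by
  apply List.ext_getElem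
  · simp [seg]
  · intro i h1 h2
    simp only [seg, List.getElem_ofFn, extL]
    rw [List.getD_eq_getElem]

lemma gUE_mono {X : Type*} (Q : List X → (X → EReal) → EReal)
    {f g : (ℕ → X) → EReal} (s : List X) (h : ∀ ω, f ω ≤ g ω) :
    gUE Q f s ≤ gUE Q g s := by
  apply sInf_le_sInf
  rintro y ⟨M, hM, hdom, rfl⟩
  exact ⟨M, hM, fun ω hω => (h ω).trans (hdom ω hω), rfl⟩

lemma ereal_le_add_of_nonneg {a : EReal} {d : ℝ} (hd : 0 ≤ d) : a ≤ a + (d : EReal) := by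
  calc a = a + 0 := (add_zero a).symm
  _ ≤ a + (d : EReal) := by
      apply add_le_add_right
      exact_mod_cast hd

lemma core {X : Type*} [Fintype X] [Nonempty X]
    (Q : List X → (X → EReal) → EReal) (hQ : ∀ s, IsUpperExpectation (Q s))
    (s : List X) (fn : ℕ → (ℕ → X) → ℝ)
    (B0 : ℝ) (hB0 : ∀ n ω, fn n ω ≤ B0)
    (hmeas : ∀ n, NMeas n (fn n))
    (hanti : ∀ m n, m ≤ n → ∀ ω, fn n ω ≤ fn m ω)
    (f : (ℕ → X) → EReal)
    (hlim : ∀ ω, Tendsto (fun n => ((fn n ω : ℝ) : EReal)) atTop (𝓝 (f ω)))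
    (M : List X → EReal) (hM : IsSupermartingale Q M)
    (hdom : ∀ ω ∈ cyl s, f ω ≤ liminf (fun n => M (seg ω n)) atTop)
    (δ : ℝ) (hδ : 0 < δ) :
    ∃ n, gUE Q (fun ω => ((fn n ω : ℝ) : EReal)) s ≤ M s + (δ : EReal) := by
  classical
  obtain ⟨B, hB⟩ := hM.1
  have hMQ := hM.2
  set M' : List X → EReal := fun p => min (M p) (B0 : EReal) with hM'def
  set b' : ℝ := min B B0 with hb'def
  have hM'lb : ∀ p, (b' : EReal) ≤ M' p := by
    intro p
    apply le_min
    · exact le_trans (by exact_mod_cast min_le_left B B0) (hB p)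
    · exact_mod_cast min_le_right B B0
  have hM'ub : ∀ p, M' p ≤ (B0 : EReal) := fun p => min_le_right _ _
  have hM'real : ∀ p, ∃ r : ℝ, M' p = (r : EReal) := by
    intro p
    refine ⟨(M' p).toReal, (EReal.coe_toReal ?_ ?_).symm⟩
    · exact ne_top_of_le_ne_top (EReal.coe_ne_top B0) (hM'ub p)
    · exact ne_bot_of_le_ne_bot (EReal.coe_ne_bot b') (hM'lb p)
  have hM'bb : BddBelowF (fun p : List X => M' p) := ⟨b', hM'lb⟩
  have hM'mart : IsSupermartingale Q M' := by
    refine ⟨⟨b', hM'lb⟩, fun p => ?_⟩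
    apply le_min
    · refine le_trans ((hQ p).mono _ (fun x => M (p ++ [x])) ⟨b', fun x => hM'lb _⟩
        ⟨B, fun x => hB _⟩ (fun x => min_le_left _ _)) (hMQ p)
    · refine le_trans ((hQ p).mono _ (fun _ => (B0 : EReal)) ⟨b', fun x => hM'lb _⟩
        ⟨B0, fun x => le_refl _⟩ (fun x => min_le_right _ _)) ((hQ p).const B0).le
  have hfB0 : ∀ ω, f ω ≤ (B0 : EReal) := by
    intro ω
    refine le_of_tendsto (hlim ω) (Eventually.of_forall fun n => ?_)
    exact_mod_cast hB0 n ω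
  have hdom' : ∀ ω ∈ cyl s, f ω ≤ liminf (fun n => M' (seg ω n)) atTop := by
    intro ω hω
    rw [le_liminf_iff]
    intro y hy
    have h1 : y < liminf (fun n => M (seg ω n)) atTop := lt_of_lt_of_le hy (hdom ω hω)
    filter_upwards [eventually_lt_of_lt_liminf h1] with n hn
    exact lt_min hn (lt_of_lt_of_le hy (hfB0 ω))
  set good : List X → Prop :=
    fun p => s.length ≤ p.length ∧ ((fn p.length (extL p) : ℝ) : EReal) ≤ M' p + (δ : EReal)
    with hgooddef
  have good_seg : ∀ (ω : ℕ → X) (k : ℕ),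
      good (seg ω k) ↔ (s.length ≤ k ∧ ((fn k ω : ℝ) : EReal) ≤ M' (seg ω k) + (δ : EReal)) := by
    intro ω k
    have h1 : (seg ω k).length = k := seg_length ω k
    have h2 : fn k (extL (seg ω k)) = fn k ω := by
      apply hmeas k
      have h3 := seg_extL (seg ω k)
      rw [h1] at h3
      exact h3
    rw [hgooddef]
    simp only [h1, h2]
  have claim1 : ∀ ω ∈ cyl s, ∃ k, good (seg ω k) := by
    intro ω hω
    by_cases hbot : f ω = ⊥
    · have hev1 : ∀ᶠ k in atTop, ((fn k ω : ℝ) : EReal) < (b' : EReal) := by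
        refine (hlim ω).eventually_lt_const ?_
        rw [hbot]; exact bot_lt_iff_ne_bot.2 (EReal.coe_ne_bot b')
      obtain ⟨k, hk1, hk2⟩ := (hev1.and (eventually_ge_atTop s.length)).exists
      refine ⟨k, (good_seg ω k).2 ⟨hk2, ?_⟩⟩
      exact le_trans hk1.le (le_trans (hM'lb _) (ereal_le_add_of_nonneg hδ.le))
    · have htop : f ω ≠ ⊤ := ne_top_of_le_ne_top (EReal.coe_ne_top B0) (hfB0 ω)
      set r : ℝ := (f ω).toReal with hrdef
      have hr : (r : EReal) = f ω := EReal.coe_toReal htop hbot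
      have hfL : f ω ≤ liminf (fun n => M' (seg ω n)) atTop := hdom' ω hω
      have h1 : ((r - δ/2 : ℝ) : EReal) < liminf (fun n => M' (seg ω n)) atTop := by
        refine lt_of_lt_of_le ?_ hfL
        rw [← hr]
        exact_mod_cast sub_lt_self r (half_pos hδ)
      have hev1 := eventually_lt_of_lt_liminf h1
      have hev2 : ∀ᶠ k in atTop, ((fn k ω : ℝ) : EReal) < ((r + δ/2 : ℝ) : EReal) := by
        refine (hlim ω).eventually_lt_const ?_
        rw [← hr]
        exact_mod_cast lt_add_of_pos_right r (half_pos hδ)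
      obtain ⟨k, ⟨hk1, hk2⟩, hk3⟩ := ((hev1.and hev2).and (eventually_ge_atTop s.length)).exists
      refine ⟨k, (good_seg ω k).2 ⟨hk3, ?_⟩⟩
      refine le_trans hk2.le ?_
      have : ((r + δ/2 : ℝ) : EReal) = ((r - δ/2 : ℝ) : EReal) + (δ : EReal) := by
        rw [← EReal.coe_add]
        norm_cast
        ring
      rw [this]
      exact add_le_add_left hk1.le _
  -- compactness: a uniform bound on the first good time
  have claim2 : ∃ N0 : ℕ, ∀ ω ∈ cyl s, ∃ k ≤ N0, good (seg ω k) := by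
    by_contra hcon
    push_neg at hcon
    letI : TopologicalSpace X := ⊥
    haveI : DiscreteTopology X := ⟨rfl⟩
    have hclosed : ∀ (k : ℕ) (S : Set (List X)), IsClosed {ω : ℕ → X | seg ω k ∈ S} := by
      intro k S
      have hcont : Continuous (fun ω : ℕ → X => (fun i : Fin k => ω i)) :=
        continuous_pi fun i => continuous_apply (i : ℕ)
      have : {ω : ℕ → X | seg ω k ∈ S}
          = (fun ω : ℕ → X => (fun i : Fin k => ω i)) ⁻¹' {v : Fin k → X | List.ofFn v ∈ S} := rfl
      rw [this]
      exact (isClosed_discrete _).preimage hcont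
    set C : ℕ → Set (ℕ → X) :=
      fun N => cyl s ∩ {ω | ∀ k ≤ N, ¬ good (seg ω k)} with hCdef
    have hCclosed : ∀ N, IsClosed (C N) := by
      intro N
      apply IsClosed.inter
      · exact hclosed s.length {p | p = s}
      · have : {ω : ℕ → X | ∀ k ≤ N, ¬ good (seg ω k)}
            = ⋂ k ∈ Finset.range (N + 1), {ω : ℕ → X | ¬ good (seg ω k)} := by
          ext ω
          simp [Nat.lt_succ_iff]
        rw [this]
        exact isClosed_biInter fun k _ => hclosed k {p | ¬ good p}
    have hCne : ∀ N, (C N).Nonempty := by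
      intro N
      obtain ⟨ω, hω1, hω2⟩ := hcon N
      exact ⟨ω, hω1, fun k hk => hω2 k hk⟩
    have hCanti : ∀ {a b : ℕ}, a ≤ b → C b ⊆ C a := by
      intro a b hab ω hω
      exact ⟨hω.1, fun k hk => hω.2 k (hk.trans hab)⟩
    have hCdir : Directed (· ⊇ ·) C := fun a b => ⟨max a b,
      hCanti (le_max_left a b), hCanti (le_max_right a b)⟩
    have hCcpt : ∀ N, IsCompact (C N) := fun N => (hCclosed N).isCompact
    obtain ⟨ω, hω⟩ := IsCompact.nonempty_iInter_of_directed_nonempty_isCompact_isClosed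
      C hCdir hCne hCcpt hCclosed
    have hωcyl : ω ∈ cyl s := (Set.mem_iInter.1 hω 0).1
    obtain ⟨k, hk⟩ := claim1 ω hωcyl
    exact (Set.mem_iInter.1 hω k).2 k le_rfl hk
  obtain ⟨N0, hN0⟩ := claim2
  -- the stopped supermartingale
  set ρ : List X → ℕ := fun p =>
    if h : ∃ k, k ≤ p.length ∧ good (p.take k) then Nat.find h else p.length with hρdef
  have ρ_pos : ∀ (p : List X) (h : ∃ k, k ≤ p.length ∧ good (p.take k)),
      ρ p = Nat.find h := by
    intro p h; simp only [hρdef]; exact dif_pos h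
  have ρ_neg : ∀ (p : List X), ¬(∃ k, k ≤ p.length ∧ good (p.take k)) → ρ p = p.length := by
    intro p h; simp only [hρdef]; exact dif_neg h
  set NN : List X → EReal := fun p => M' (p.take (ρ p)) with hNNdef
  have hchild : ∀ (p : List X) (x : X),
      (∀ _ : (∃ k, k ≤ p.length ∧ good (p.take k)), NN (p ++ [x]) = NN p) ∧
      ((¬ ∃ k, k ≤ p.length ∧ good (p.take k)) → NN (p ++ [x]) = M' (p ++ [x])) := by
    intro p x
    have hlen : (p ++ [x]).length = p.length + 1 := by simp
    have htake : ∀ k, k ≤ p.length → (p ++ [x]).take k = p.take k := fun k hk =>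
      List.take_append_of_le_length hk
    constructor
    · intro h
      have hq : ∃ k, k ≤ (p ++ [x]).length ∧ good ((p ++ [x]).take k) := by
        obtain ⟨k, hk1, hk2⟩ := h
        exact ⟨k, by rw [hlen]; omega, by rw [htake k hk1]; exact hk2⟩
      have h1 : Nat.find hq ≤ Nat.find h := by
        apply Nat.find_min' hq
        obtain ⟨hk1, hk2⟩ := Nat.find_spec h
        exact ⟨by rw [hlen]; omega, by rw [htake _ hk1]; exact hk2⟩
      have hfle : Nat.find hq ≤ p.length := h1.trans (Nat.find_spec h).1
      have h2 : Nat.find h ≤ Nat.find hq := by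
        apply Nat.find_min' h
        obtain ⟨hk1, hk2⟩ := Nat.find_spec hq
        rw [htake _ hfle] at hk2
        exact ⟨hfle, hk2⟩
      have heq : Nat.find hq = Nat.find h := le_antisymm h1 h2
      simp only [hNNdef]
      rw [ρ_pos _ hq, ρ_pos p h, heq, htake _ ((Nat.find_spec h).1)]
    · intro h
      by_cases hq : ∃ k, k ≤ (p ++ [x]).length ∧ good ((p ++ [x]).take k)
      · have hfind : Nat.find hq = p.length + 1 := by
          have h1 : p.length + 1 ≤ Nat.find hq := by
            by_contra hcon
            push_neg at hcon
            have hk1 := (Nat.find_spec hq).1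
            have hk2 := (Nat.find_spec hq).2
            have hle : Nat.find hq ≤ p.length := by omega
            rw [htake _ hle] at hk2
            exact h ⟨Nat.find hq, hle, hk2⟩
          have h2 : Nat.find hq ≤ p.length + 1 := by
            have h3 := (Nat.find_spec hq).1
            omega
          omega
        simp only [hNNdef]
        rw [ρ_pos _ hq, hfind, ← hlen, List.take_length]
      · simp only [hNNdef]
        rw [ρ_neg _ hq, List.take_length]
  have hNNs : NN s = M' s := by
    simp only [hNNdef]
    by_cases h : ∃ k, k ≤ s.length ∧ good (s.take k)
    · have hspec := Nat.find_spec h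
      have hk1 := hspec.1
      obtain ⟨h2, -⟩ := hspec.2
      have h3 : (s.take (Nat.find h)).length = Nat.find h := by
        rw [List.length_take]; omega
      rw [h3] at h2
      have h4 : Nat.find h = s.length := by omega
      rw [ρ_pos s h, h4, List.take_length]
    · rw [ρ_neg s h, List.take_length]
  set P : List X → EReal := fun p => NN p + (δ : EReal) with hPdef
  have hNNlb : ∀ p, (b' : EReal) ≤ NN p := fun p => hM'lb _
  have hPlb : ∀ p, ((b' + δ : ℝ) : EReal) ≤ P p := by
    intro p
    simp only [hPdef]
    rw [EReal.coe_add]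
    exact add_le_add_left (hNNlb p) _
  have hPmart : IsSupermartingale Q P := by
    refine ⟨⟨b' + δ, hPlb⟩, fun p => ?_⟩
    by_cases hp : ∃ k, k ≤ p.length ∧ good (p.take k)
    · obtain ⟨r, hr⟩ := hM'real (p.take (ρ p))
      have hPp : P p = ((r + δ : ℝ) : EReal) := by
        simp only [hPdef, hNNdef]
        rw [hr, EReal.coe_add]
      have hfun : (fun x : X => P (p ++ [x])) = fun _ => ((r + δ : ℝ) : EReal) := by
        funext x
        have hc : P (p ++ [x]) = P p := by
          simp only [hPdef]
          rw [(hchild p x).1 hp]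
        rw [hc, hPp]
      rw [hfun, (hQ p).const (r + δ), hPp]
    · have hfun : (fun x : X => P (p ++ [x])) = fun x => M' (p ++ [x]) + (δ : EReal) := by
        funext x
        simp only [hPdef]
        rw [(hchild p x).2 hp]
      rw [hfun]
      have hsub := (hQ p).subadd (fun x => M' (p ++ [x])) (fun _ => (δ : EReal))
        ⟨b', fun x => hM'lb _⟩ ⟨δ, fun _ => le_rfl⟩
      refine le_trans hsub ?_
      rw [(hQ p).const δ]
      have h1 : Q p (fun x => M' (p ++ [x])) ≤ M' p := hM'mart.2 p
      have h2 : P p = M' p + (δ : EReal) := by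
        simp only [hPdef, hNNdef]
        rw [ρ_neg p hp, List.take_length]
      rw [h2]
      exact add_le_add_left h1 _
  have hPdom : ∀ ω ∈ cyl s, ((fn N0 ω : ℝ) : EReal) ≤ liminf (fun m => P (seg ω m)) atTop := by
    intro ω hω
    obtain ⟨k0, hk0N, hk0g⟩ := hN0 ω hω
    have hgood : ∃ k, good (seg ω k) := ⟨k0, hk0g⟩
    have hKs : good (seg ω (Nat.find hgood)) := Nat.find_spec hgood
    have hKle : Nat.find hgood ≤ N0 := (Nat.find_min' hgood hk0g).trans hk0N
    have hev : ∀ᶠ m in atTop, P (seg ω m) = M' (seg ω (Nat.find hgood)) + (δ : EReal) := by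
      filter_upwards [eventually_ge_atTop (Nat.find hgood)] with m hm
      have hexm : ∃ k, k ≤ (seg ω m).length ∧ good ((seg ω m).take k) :=
        ⟨Nat.find hgood, by rw [seg_length]; exact hm, by rw [seg_take ω hm]; exact hKs⟩
      have hρm : ρ (seg ω m) = Nat.find hgood := by
        rw [ρ_pos _ hexm]
        apply le_antisymm
        · exact Nat.find_min' hexm
            ⟨by rw [seg_length]; exact hm, by rw [seg_take ω hm]; exact hKs⟩
        · obtain ⟨hj1, hj2⟩ := Nat.find_spec hexm
          have hl := seg_length ω m
          have hj1' : Nat.find hexm ≤ m := by omega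
          rw [seg_take ω hj1'] at hj2
          exact Nat.find_min' hgood hj2
      simp only [hPdef, hNNdef]
      rw [hρm, seg_take ω hm]
    have hliminf : liminf (fun m => P (seg ω m)) atTop
        = M' (seg ω (Nat.find hgood)) + (δ : EReal) := by
      rw [liminf_congr hev, liminf_const]
    rw [hliminf]
    have hgs := (good_seg ω (Nat.find hgood)).1 hKs
    refine le_trans ?_ hgs.2
    exact_mod_cast hanti (Nat.find hgood) N0 hKle ω
  have hPs : P s ≤ M s + (δ : EReal) := by
    simp only [hPdef]
    rw [hNNs]
    exact add_le_add_left (min_le_left _ _) _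
  refine ⟨N0, le_trans (sInf_le ⟨P, hPmart, hPdom, rfl⟩) hPs⟩


/-- Proposition 10: the game-theoretic upper expectation is continuous with
respect to non-increasing sequences of `n`-measurable gambles. -/
theorem stmt19 {X : Type*} [Fintype X] [Nonempty X]
    (Q : List X → (X → EReal) → EReal) (hQ : ∀ s, IsUpperExpectation (Q s))
    (s : List X) (fn : ℕ → (ℕ → X) → ℝ)
    (hbdd : ∀ n, ∃ B : ℝ, ∀ ω, |fn n ω| ≤ B)
    (hmeas : ∀ n, NMeas n (fn n))
    (hmono : ∀ n ω, fn (n + 1) ω ≤ fn n ω)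
    (f : (ℕ → X) → EReal)
    (hlim : ∀ ω, Tendsto (fun n => ((fn n ω : ℝ) : EReal)) atTop (𝓝 (f ω))) :
    Tendsto (fun n => gUE Q (fun ω => ((fn n ω : ℝ) : EReal)) s) atTop
      (𝓝 (gUE Q f s)) := by
  classical
  have hanti : ∀ m n, m ≤ n → ∀ ω, fn n ω ≤ fn m ω := by
    intro m n h ω
    induction h with
    | refl => exact le_rfl
    | step _ ih => exact le_trans (hmono _ ω) ih
  obtain ⟨B0, hB0abs⟩ := hbdd 0
  have hB0 : ∀ n ω, fn n ω ≤ B0 := fun n ω =>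
    le_trans (hanti 0 n (Nat.zero_le n) ω) (abs_le.1 (hB0abs ω)).2
  have hA : Antitone (fun n => gUE Q (fun ω => ((fn n ω : ℝ) : EReal)) s) := by
    intro m n hmn
    exact gUE_mono Q s fun ω => by exact_mod_cast hanti m n hmn ω
  have htend := tendsto_atTop_iInf hA
  suffices h : gUE Q f s = ⨅ n, gUE Q (fun ω => ((fn n ω : ℝ) : EReal)) s by
    rw [h]; exact htend
  apply le_antisymm
  · refine le_iInf fun n => gUE_mono Q s fun ω => ?_
    refine le_of_tendsto (hlim ω) ?_
    filter_upwards [eventually_ge_atTop n] with m hm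
    exact_mod_cast hanti n m hm ω
  · unfold gUE
    apply le_sInf
    rintro y ⟨M, hM, hdom, rfl⟩
    have hMb : M s ≠ ⊥ := by
      obtain ⟨B, hB⟩ := hM.1
      exact ne_bot_of_le_ne_bot (EReal.coe_ne_bot B) (hB s)
    have key : ∀ δ : ℝ, 0 < δ →
        (⨅ n, gUE Q (fun ω => ((fn n ω : ℝ) : EReal)) s) ≤ M s + (δ : EReal) := by
      intro δ hδ
      obtain ⟨n, hn⟩ := core Q hQ s fn B0 hB0 hmeas hanti f hlim M hM hdom δ hδ
      exact (iInf_le _ n).trans hn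
    refine EReal.le_of_forall_lt_iff_le.1 fun z hz => ?_
    have hMt : M s ≠ ⊤ := fun h => by rw [h] at hz; exact (not_top_lt hz)
    have hr : (((M s).toReal : ℝ) : EReal) = M s := EReal.coe_toReal hMt hMb
    have hrz : (M s).toReal < z := by rw [← hr] at hz; exact_mod_cast hz
    have hδ : 0 < z - (M s).toReal := by linarith
    refine le_trans (key (z - (M s).toReal) hδ) ?_
    rw [← hr, ← EReal.coe_add]
    norm_cast
    simp only [EReal.toReal_coe]
    linarith
end
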